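/- arXiv:math/0002127 — 8 statements merged into one kernel-verified Lean document; each statement's English description precedes it below -/
import Mathlib

section
/- Let $\psi \in L^2(\mathbb{R})$ and let $E = \mathrm{supp}(\hat\psi)$ (the support of the Fourier transform, up to null sets). Suppose there exists a measurable $2\pi$-periodic function $g$ such that $e^{-i\xi/d^n}\hat\psi(\xi) = g(\xi)\hat\psi(\xi)$ for a.e. $\xi$. If $F \subseteq \mathbb{R}$ has positive measure and both $F \subseteq E$ and $F + 2\pi k \subseteq E$ (up to null sets) for an integer $k$, then $e^{-2\pi i k/d^n} = 1$, equivalently $d^n$ divides $k$. -/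
open MeasureTheory Complex

lemma ae_shift' {P : ℝ → Prop} (c : ℝ) (h : ∀ᵐ ξ : ℝ, P ξ) : ∀ᵐ ξ : ℝ, P (ξ + c) :=
  ((measurePreserving_add_right (volume : Measure ℝ) c).quasiMeasurePreserving.tendsto_ae).eventually h

lemma g_period' (g : ℝ → ℂ) (hper : ∀ᵐ ξ : ℝ, g (ξ + 2 * Real.pi) = g ξ) (m : ℤ) :
    ∀ᵐ ξ : ℝ, g (ξ + 2 * Real.pi * m) = g ξ := by
  induction m using Int.induction_on with
  | zero => simp
  | succ m ih =>
    filter_upwards [ih, ae_shift' (2 * Real.pi * m) hper] with ξ h1 h2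
    have e : ξ + 2 * Real.pi * ((m : ℤ) + 1 : ℤ) = (ξ + 2 * Real.pi * m) + 2 * Real.pi := by
      push_cast; ring
    rw [e, h2]; exact_mod_cast h1
  | pred m ih =>
    filter_upwards [ih, ae_shift' (2 * Real.pi * (-(m : ℝ) - 1)) hper] with ξ h1 h2
    have e : (ξ + 2 * Real.pi * (-(m : ℝ) - 1)) + 2 * Real.pi = ξ + 2 * Real.pi * (-(m : ℤ) : ℤ) := by
      push_cast; ring
    have e2 : ξ + 2 * Real.pi * ((-(m : ℤ) - 1 : ℤ) : ℝ) = ξ + 2 * Real.pi * (-(m : ℝ) - 1) := by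
      push_cast; ring
    rw [e2]
    rw [e] at h2
    rw [← h2]
    exact_mod_cast h1

/-- If `e^{-iξ/dⁿ} ψ̂(ξ) = g(ξ) ψ̂(ξ)` a.e. for a `2π`-periodic `g`, and `supp ψ̂` is
partially self-similar with respect to `2πk` (witnessed by a set `F` of positive measure),
then `e^{-2πik/dⁿ} = 1`, equivalently `dⁿ ∣ k`. -/
theorem partial_self_similarity_divisibility (d n : ℕ) (hd : 2 ≤ d) (k : ℤ)
    (ψ : ℝ → ℂ) (hψ : MemLp ψ 2 (volume : Measure ℝ))
    (g : ℝ → ℂ) (hgm : Measurable g)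
    (hper : ∀ᵐ ξ : ℝ, g (ξ + 2 * Real.pi) = g ξ)
    (heq : ∀ᵐ ξ : ℝ, Complex.exp (-I * ξ / (d : ℂ) ^ n) * FourierTransform.fourier ψ ξ =
      g ξ * FourierTransform.fourier ψ ξ)
    (F : Set ℝ) (hFm : MeasurableSet F) (hFpos : 0 < volume F)
    (hF : ∀ᵐ ξ : ℝ, ξ ∈ F → FourierTransform.fourier ψ ξ ≠ 0)
    (hFk : ∀ᵐ ξ : ℝ, ξ ∈ F → FourierTransform.fourier ψ (ξ + 2 * Real.pi * k) ≠ 0) :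
    Complex.exp (-2 * Real.pi * I * k / (d : ℂ) ^ n) = 1 ∧ ((d : ℤ) ^ n ∣ k) := by
  have hNne : ((d : ℂ) ^ n) ≠ 0 := by
    apply pow_ne_zero
    simp only [ne_eq, Nat.cast_eq_zero]
    omega
  -- combine all a.e. facts
  have hS : ∀ᵐ ξ : ℝ, ξ ∈ F →
      Complex.exp (-2 * Real.pi * I * k / (d : ℂ) ^ n) = 1 := by
    filter_upwards [heq, ae_shift' (2 * Real.pi * k) heq, g_period' g hper k, hF, hFk]
      with ξ h1 h2 h3 h4 h5 hξ
    have hb1 := h4 hξ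
    have hb2 := h5 hξ
    have e1 : Complex.exp (-I * ξ / (d : ℂ) ^ n) = g ξ := mul_right_cancel₀ hb1 h1
    have e2 : Complex.exp (-I * ((ξ : ℂ) + 2 * Real.pi * k) / (d : ℂ) ^ n) = g ξ := by
      have h2' := mul_right_cancel₀ hb2 h2
      rw [h3] at h2'
      rw [← h2']
      push_cast
      ring_nf
    have e3 : Complex.exp (-I * ((ξ : ℂ) + 2 * Real.pi * k) / (d : ℂ) ^ n) =
        Complex.exp (-I * ξ / (d : ℂ) ^ n) *
          Complex.exp (-2 * Real.pi * I * k / (d : ℂ) ^ n) := by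
      rw [← Complex.exp_add]
      congr 1
      field_simp
      ring
    have e4 : Complex.exp (-I * ξ / (d : ℂ) ^ n) * 1 =
        Complex.exp (-I * ξ / (d : ℂ) ^ n) *
          Complex.exp (-2 * Real.pi * I * k / (d : ℂ) ^ n) := by
      rw [mul_one, ← e3, e2, ← e1]
    exact (mul_left_cancel₀ (Complex.exp_ne_zero _) e4).symm
  -- find a point in F where it holds
  have hex : ∃ ξ, ξ ∈ F ∧ Complex.exp (-2 * Real.pi * I * k / (d : ℂ) ^ n) = 1 := by
    by_contra hc
    push_neg at hc
    have hsub : F ⊆ {ξ : ℝ | ¬ (ξ ∈ F → Complex.exp (-2 * Real.pi * I * k / (d : ℂ) ^ n) = 1)} := by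
      intro ξ hξ
      simp only [Set.mem_setOf_eq, Classical.not_imp]
      exact ⟨hξ, hc ξ hξ⟩
    have h0 : volume {ξ : ℝ | ¬ (ξ ∈ F → Complex.exp (-2 * Real.pi * I * k / (d : ℂ) ^ n) = 1)} = 0 :=
      ae_iff.mp hS
    have := measure_mono (μ := (volume : Measure ℝ)) hsub
    rw [h0] at this
    exact absurd (le_antisymm this zero_le) hFpos.ne'
  obtain ⟨ξ, _, key⟩ := hex
  refine ⟨key, ?_⟩
  rw [Complex.exp_eq_one_iff] at key
  obtain ⟨m, hm⟩ := key
  rw [div_eq_iff hNne] at hm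
  have h2π : (2 * (Real.pi : ℂ) * I) ≠ 0 := by
    simp [Real.pi_ne_zero, Complex.I_ne_zero, Complex.ofReal_ne_zero]
  have h' : (-(k : ℂ)) * (2 * Real.pi * I) = ((m : ℂ) * (d : ℂ) ^ n) * (2 * Real.pi * I) := by
    linear_combination hm
  have h'' : (-(k : ℂ)) = (m : ℂ) * (d : ℂ) ^ n := mul_right_cancel₀ h2π h'
  have hz : (-k : ℤ) = m * (d : ℤ) ^ n := by exact_mod_cast h''
  exact ⟨-m, by linarith⟩
end

section
/- Let $E \subseteq \mathbb{R}$ be a measurable set such that the translates $\{E + 2\pi k : k \in \mathbb{Z}\}$ cover $\mathbb{R}$ (i.e., $\tau: E \to [0,2\pi)$, $\tau(x) = x \bmod 2\pi$, is surjective up to null sets). Then there exists a measurable subset $F \subseteq E$ such that $F$ is $2\pi$-translation congruent to $[0, 2\pi)$: there is a measurable partition $\{F_k\}_{k\in\mathbb{Z}}$ of $F$ with $\{F_k + 2\pi k\}_{k \in \mathbb{Z}}$ a partition of $[0,2\pi)$ modulo null sets. -/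
open MeasureTheory

/-- If the `2π`-integer translates of a measurable set `E` cover `ℝ` up to a null set,
then `E` contains a measurable subset `F` which is `2π`-translation congruent to `[0, 2π)`:
there is a measurable partition `{F_k}` of `F` whose translates `{F_k + 2πk}` form a
partition of `[0, 2π)` modulo null sets. -/
theorem exists_translation_congruent_subset (E : Set ℝ) (hE : MeasurableSet E)
    (hcover : volume (Set.univ \ ⋃ k : ℤ, (fun x => x + 2 * Real.pi * k) '' E) = 0) :
    ∃ F : Set ℝ, MeasurableSet F ∧ F ⊆ E ∧
      ∃ Fk : ℤ → Set ℝ,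
        (∀ k, MeasurableSet (Fk k)) ∧
        (Pairwise fun i j => Disjoint (Fk i) (Fk j)) ∧
        (⋃ k, Fk k) = F ∧
        (Pairwise fun (i j : ℤ) =>
          volume (((fun x => x + 2 * Real.pi * (i : ℝ)) '' Fk i) ∩
            ((fun x => x + 2 * Real.pi * (j : ℝ)) '' Fk j)) = 0) ∧
        volume (symmDiff (⋃ k : ℤ, (fun x => x + 2 * Real.pi * k) '' Fk k)
          (Set.Ico 0 (2 * Real.pi))) = 0 := by
  have hπ : (0:ℝ) < 2 * Real.pi := by positivity
  have himg : ∀ (c : ℝ) (s : Set ℝ), (fun x => x + c) '' s = (fun x => x - c) ⁻¹' s := by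
    intro c s; ext x; constructor
    · rintro ⟨y, hy, rfl⟩; simpa [Set.mem_preimage]
    · intro h; exact ⟨x - c, h, by ring⟩
  set A : ℤ → Set ℝ := fun k => Set.Ico 0 (2 * Real.pi) ∩ ((fun x => x + 2 * Real.pi * k) '' E)
    with hA
  have hAmeas : ∀ k, MeasurableSet (A k) := by
    intro k
    exact measurableSet_Ico.inter ((himg _ _) ▸ (hE.preimage (measurable_id.sub measurable_const)))
  set e : ℤ ≃ ℕ := Denumerable.eqv ℤ with he
  set B : ℕ → Set ℝ := disjointed (fun n => A (e.symm n)) with hB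
  have hBmeas : ∀ n, MeasurableSet (B n) := MeasurableSet.disjointed (fun n => hAmeas _)
  have hBsub : ∀ n, B n ⊆ A (e.symm n) := disjointed_subset _
  have hBdisj : Pairwise (Function.onFun Disjoint B) := disjoint_disjointed _
  have hBunion : (⋃ n, B n) = ⋃ k, A k := by
    rw [hB, iUnion_disjointed]
    exact e.symm.surjective.iUnion_comp A
  set Fk : ℤ → Set ℝ := fun k => (fun x => x + 2 * Real.pi * k) ⁻¹' B (e k) with hFk
  have hFkmeas : ∀ k, MeasurableSet (Fk k) :=
    fun k => (hBmeas (e k)).preimage (measurable_id.add_const _)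
  have himgFk : ∀ k : ℤ, (fun x => x + 2 * Real.pi * (k:ℝ)) '' Fk k = B (e k) := by
    intro k
    rw [himg]
    ext x; simp [hFk]
  have hFkA : ∀ (k : ℤ) (x : ℝ), x ∈ Fk k → x + 2 * Real.pi * k ∈ A k := by
    intro k x hx
    have := hBsub (e k) hx
    simpa using this
  have hFkE : ∀ k, Fk k ⊆ E := by
    intro k x hx
    obtain ⟨y, hy, hyx⟩ := (hFkA k x hx).2
    have : y = x := by
      have := hyx
      simp only at this
      linarith
    exact this ▸ hy
  refine ⟨⋃ k, Fk k, MeasurableSet.iUnion hFkmeas, Set.iUnion_subset hFkE, Fk, hFkmeas, ?_, rfl,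
    ?_, ?_⟩
  · intro i j hij
    rw [Set.disjoint_left]
    intro x hxi hxj
    have h1 := (hFkA i x hxi).1
    have h2 := (hFkA j x hxj).1
    have hij1 : (i:ℝ) - j < 1 := by
      have := h1.2; have := h2.1; nlinarith
    have hij2 : (j:ℝ) - i < 1 := by
      have := h2.2; have := h1.1; nlinarith
    have : i = j := by
      have a1 : (i:ℤ) - j < 1 := by exact_mod_cast (by push_cast; linarith : ((i - j : ℤ):ℝ) < 1)
      have a2 : (j:ℤ) - i < 1 := by exact_mod_cast (by push_cast; linarith : ((j - i : ℤ):ℝ) < 1)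
      omega
    exact hij this
  · intro i j hij
    rw [himgFk, himgFk,
      Set.disjoint_iff_inter_eq_empty.mp (hBdisj (fun h => hij (e.injective h)))]
    exact measure_empty
  · have hU : (⋃ k : ℤ, (fun x => x + 2 * Real.pi * (k:ℝ)) '' Fk k) = ⋃ k, A k := by
      rw [← hBunion]
      refine Eq.trans (Set.iUnion_congr himgFk) ?_
      exact e.surjective.iUnion_comp B
    rw [hU, Set.symmDiff_def]
    apply measure_union_null
    · have : (⋃ k, A k) \ Set.Ico 0 (2 * Real.pi) = ∅ := by
        rw [Set.diff_eq_empty]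
        exact Set.iUnion_subset fun k => Set.inter_subset_left
      rw [this]; exact measure_empty
    · apply measure_mono_null _ hcover
      intro x hx
      refine ⟨trivial, ?_⟩
      intro hmem
      obtain ⟨_, ⟨k, rfl⟩, hk⟩ := hmem
      exact hx.2 (Set.mem_iUnion.2 ⟨k, hx.1, hk⟩)
end

section
/- Let $d \geq 2$, $k \geq 2$ be integers and define the function $m_k: [-\pi, \pi) \to \mathbb{Z}_{\geq 0}$ (for $d = 2$) by: $m_k(\omega) = 1$ on $[-\pi, \frac{-(2^k-2)\pi}{2^k-1})$, $m_k(\omega) = 0$ on $[\frac{-(2^k-2)\pi}{2^k-1}, \frac{-2^{k-1}\pi}{2^k-1})$, $m_k(\omega) = k - j$ on $[\frac{-2^j\pi}{2^k-1}, \frac{-2^{j-1}\pi}{2^k-1})$ for $j = 2,\dots,k-1$, $m_k(\omega) = k-1$ on $[\frac{-2\pi}{2^k-1}, \frac{2\pi}{2^k-1})$, $m_k(\omega) = k-j$ on $[\frac{2^{j-1}\pi}{2^k-1}, \frac{2^j\pi}{2^k-1})$ for $j = 2,\dots,k-1$, $m_k(\omega) = 0$ on $[\frac{2^{k-1}\pi}{2^k-1},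 \frac{(2^k-2)\pi}{2^k-1})$, and $m_k(\omega) = 1$ on $[\frac{(2^k-2)\pi}{2^k-1}, \pi)$. Extend $m_k$ to $\mathbb{R}$ by $2\pi$-periodicity. Then $m_k$ satisfies the consistency equation $m_k(\omega) + 1 = m_k(\omega/2) + m_k(\omega/2 + \pi)$ for all $\omega \in [-\pi, \pi)$. -/
/-!
In units of `c = π / (2^k - 1)` all breakpoints of `m_k` are integer multiples of `c`, and
`π = (2^k - 1) c`. For `0 ≤ ω < π`, halving maps each dyadic band `[2^(j-1) c, 2^j c)` onto the
band below it, where `m_k` is one larger, and maps the gap `[2^(k-1) c, (2^k - 2) c)` into the top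
band, where `m_k = 1`; so `m_k(ω) - m_k(ω/2)` is `-1` on `[2c, (2^k - 2) c)` and `0` elsewhere.
Meanwhile `ω/2 - π` runs through `[-π, -π/2)`, where `m_k` is `0` exactly for those `ω` and `1`
otherwise. The case `ω < 0` is the mirror image, and periodicity identifies `ω/2 + π` with
`ω/2 - π`.
-/

open Real

section Archimedean

variable {R : Type*} [Field R] [LinearOrder R] [IsStrictOrderedRing R] [Archimedean R]

theorem exists_pow_mul_le_lt {y c x : R} (hy : 1 < y) (hc : 0 < c) (hx : c ≤ x) :
    ∃ n : ℕ, y ^ n * c ≤ x ∧ x < y ^ (n + 1) * c := by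
  obtain ⟨n, hn⟩ := exists_nat_pow_near ((one_le_div hc).2 hx) hy
  exact ⟨n, (le_div_iff₀ hc).1 hn.1, (div_lt_iff₀ hc).1 hn.2⟩

theorem exists_pow_mul_lt_le {y c x : R} (hy : 1 < y) (hc : 0 < c) (hx : c < x) :
    ∃ n : ℕ, y ^ n * c < x ∧ x ≤ y ^ (n + 1) * c := by
  classical
  have hex : ∃ n : ℕ, x ≤ y ^ n * c := by
    obtain ⟨n, hn⟩ := pow_unbounded_of_one_lt (x / c) hy
    exact ⟨n, ((div_lt_iff₀ hc).1 hn).le⟩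
  obtain ⟨n, hn⟩ : ∃ n, Nat.find hex = n + 1 :=
    Nat.exists_eq_add_one.2 <| Nat.pos_of_ne_zero fun h => by
      have := Nat.find_spec hex
      rw [h, pow_zero, one_mul] at this
      exact this.not_gt hx
  exact ⟨n, not_le.1 (Nat.find_min hex (by omega)), hn ▸ Nat.find_spec hex⟩

end Archimedean

/-- `m` agrees with Baggett's `m_k` on `[-(2^k - 1) c, (2^k - 1) c)`, which is `[-π, π)` for
`c = π / (2^k - 1)`. -/
structure IsBaggettMultiplicity (k : ℕ) (c : ℝ) (m : ℝ → ℤ) : Prop where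
  edge_neg : ∀ x : ℝ, -((2 ^ k - 1) * c) ≤ x → x < -((2 ^ k - 2) * c) → m x = 1
  gap_neg : ∀ x : ℝ, -((2 ^ k - 2) * c) ≤ x → x < -(2 ^ (k - 1) * c) → m x = 0
  band_neg : ∀ j : ℕ, 2 ≤ j → j ≤ k - 1 → ∀ x : ℝ,
    -(2 ^ j * c) ≤ x → x < -(2 ^ (j - 1) * c) → m x = (k : ℤ) - j
  center : ∀ x : ℝ, -(2 * c) ≤ x → x < 2 * c → m x = (k : ℤ) - 1
  band_pos : ∀ j : ℕ, 2 ≤ j → j ≤ k - 1 → ∀ x : ℝ,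
    2 ^ (j - 1) * c ≤ x → x < 2 ^ j * c → m x = (k : ℤ) - j
  gap_pos : ∀ x : ℝ, 2 ^ (k - 1) * c ≤ x → x < (2 ^ k - 2) * c → m x = 0
  edge_pos : ∀ x : ℝ, (2 ^ k - 2) * c ≤ x → x < (2 ^ k - 1) * c → m x = 1

namespace IsBaggettMultiplicity

variable {k : ℕ} {c : ℝ} {m : ℝ → ℤ}

theorem eq_one_of_top_band_pos (hm : IsBaggettMultiplicity k c m) (hk : 2 ≤ k) {x : ℝ}
    (h₁ : 2 ^ (k - 2) * c ≤ x) (h₂ : x < 2 ^ (k - 1) * c) : m x = 1 := by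
  obtain ⟨n, rfl⟩ := Nat.exists_eq_add_of_le' hk
  rcases n with _ | n
  · norm_num at h₁ h₂ ⊢
    rw [hm.center x (by linarith) (by linarith)]
    norm_num
  · rw [hm.band_pos (n + 2) (by omega) (by omega) x (by simpa using h₁) (by simpa using h₂)]
    omega

theorem eq_one_of_top_band_neg (hm : IsBaggettMultiplicity k c m) (hk : 2 ≤ k) {x : ℝ}
    (h₁ : -(2 ^ (k - 1) * c) ≤ x) (h₂ : x < -(2 ^ (k - 2) * c)) : m x = 1 := by
  obtain ⟨n, rfl⟩ := Nat.exists_eq_add_of_le' hk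
  rcases n with _ | n
  · norm_num at h₁ h₂ ⊢
    rw [hm.center x (by linarith) (by linarith)]
    norm_num
  · rw [hm.band_neg (n + 2) (by omega) (by omega) x (by simpa using h₁) (by simpa using h₂)]
    omega

theorem apply_half_eq_add_one_of_band_pos (hm : IsBaggettMultiplicity k c m) (hc : 0 < c)
    {x : ℝ} (h₁ : 2 * c ≤ x) (h₂ : x < 2 ^ (k - 1) * c) : m (x / 2) = m x + 1 := by
  obtain ⟨j, hlo, hhi⟩ := exists_pow_mul_le_lt one_lt_two hc (show c ≤ x by linarith)
  have hjk : j + 1 ≤ k - 1 :=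
    (pow_lt_pow_iff_right₀ one_lt_two).1 (lt_of_mul_lt_mul_right (hlo.trans_lt h₂) hc.le)
  rcases j with _ | _ | j
  · norm_num at hhi; linarith
  · rw [hm.band_pos 2 le_rfl hjk x (by simpa using hlo) hhi,
      hm.center (x / 2) (by linarith) (by norm_num at hhi; linarith)]
    ring
  · rw [hm.band_pos (j + 3) (by omega) hjk x (by simpa using hlo) hhi]
    rw [pow_succ] at hlo hhi
    rw [hm.band_pos (j + 2) (by omega) (by omega) (x / 2)
      (by simp only [Nat.add_one_sub_one]; linarith) (by linarith)]
    push_cast; ring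

theorem apply_half_eq_add_one_of_band_neg (hm : IsBaggettMultiplicity k c m) (hc : 0 < c)
    {x : ℝ} (h₁ : -(2 ^ (k - 1) * c) ≤ x) (h₂ : x < -(2 * c)) : m (x / 2) = m x + 1 := by
  obtain ⟨j, hlo, hhi⟩ := exists_pow_mul_lt_le one_lt_two hc (show c < -x by linarith)
  have hjk : j + 1 ≤ k - 1 :=
    (pow_lt_pow_iff_right₀ one_lt_two).1 (lt_of_mul_lt_mul_right (by linarith) hc.le)
  rcases j with _ | _ | j
  · norm_num at hhi; linarith
  · rw [hm.band_neg 2 le_rfl hjk x (by norm_num at hhi; linarith)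
        (by simp only [Nat.add_one_sub_one]; linarith),
      hm.center (x / 2) (by norm_num at hhi; linarith) (by linarith)]
    ring
  · rw [hm.band_neg (j + 3) (by omega) hjk x (by linarith)
      (by simp only [Nat.add_one_sub_one]; linarith)]
    rw [pow_succ] at hlo hhi
    rw [hm.band_neg (j + 2) (by omega) (by omega) (x / 2) (by linarith)
      (by simp only [Nat.add_one_sub_one]; linarith)]
    push_cast; ring

theorem consistency_of_nonneg (hm : IsBaggettMultiplicity k c m) (hk : 2 ≤ k) (hc : 0 < c)
    {ω : ℝ} (h₁ : 0 ≤ ω) (h₂ : ω < (2 ^ k - 1) * c) :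
    m ω + 1 = m (ω / 2) + m (ω / 2 - (2 ^ k - 1) * c) := by
  have e₁ : (2 : ℝ) ^ k * c = 4 * (2 ^ (k - 2) * c) := by
    rw [← pow_sub_mul_pow 2 hk]; ring
  have e₂ : (2 : ℝ) ^ (k - 1) * c = 2 * (2 ^ (k - 2) * c) := by
    rw [← pow_sub_mul_pow 2 (show 1 ≤ k - 1 by omega), show k - 1 - 1 = k - 2 by omega]; ring
  have hP : c ≤ 2 ^ (k - 2) * c := le_mul_of_one_le_left hc.le (one_le_pow₀ one_le_two)
  rcases lt_or_ge ω (2 * c) with hω | hω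
  · rw [hm.center ω (by linarith) hω, hm.center (ω / 2) (by linarith) (by linarith),
      hm.edge_neg (ω / 2 - (2 ^ k - 1) * c) (by linarith) (by linarith)]
  rcases lt_or_ge ω (2 ^ (k - 1) * c) with hω' | hω'
  · rw [hm.apply_half_eq_add_one_of_band_pos hc hω hω',
      hm.gap_neg (ω / 2 - (2 ^ k - 1) * c) (by linarith) (by linarith)]
    ring
  rcases lt_or_ge ω ((2 ^ k - 2) * c) with hω'' | hω''
  · rw [hm.gap_pos ω hω' hω'', hm.eq_one_of_top_band_pos hk (by linarith) (by linarith),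
      hm.gap_neg (ω / 2 - (2 ^ k - 1) * c) (by linarith) (by linarith)]
    ring
  · rw [hm.edge_pos ω hω'' h₂, hm.eq_one_of_top_band_pos hk (by linarith) (by linarith),
      hm.eq_one_of_top_band_neg hk (by linarith) (by linarith)]

theorem consistency_of_neg (hm : IsBaggettMultiplicity k c m) (hk : 2 ≤ k) (hc : 0 < c)
    {ω : ℝ} (h₁ : -((2 ^ k - 1) * c) ≤ ω) (h₂ : ω < 0) :
    m ω + 1 = m (ω / 2) + m (ω / 2 + (2 ^ k - 1) * c) := by
  have e₁ : (2 : ℝ) ^ k * c = 4 * (2 ^ (k - 2) * c) := by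
    rw [← pow_sub_mul_pow 2 hk]; ring
  have e₂ : (2 : ℝ) ^ (k - 1) * c = 2 * (2 ^ (k - 2) * c) := by
    rw [← pow_sub_mul_pow 2 (show 1 ≤ k - 1 by omega), show k - 1 - 1 = k - 2 by omega]; ring
  have hP : c ≤ 2 ^ (k - 2) * c := le_mul_of_one_le_left hc.le (one_le_pow₀ one_le_two)
  rcases lt_or_ge ω (-((2 ^ k - 2) * c)) with hω | hω
  · rw [hm.edge_neg ω h₁ hω, hm.eq_one_of_top_band_neg hk (by linarith) (by linarith),
      hm.eq_one_of_top_band_pos hk (by linarith) (by linarith)]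
  rcases lt_or_ge ω (-(2 ^ (k - 1) * c)) with hω' | hω'
  · rw [hm.gap_neg ω hω hω', hm.eq_one_of_top_band_neg hk (by linarith) (by linarith),
      hm.gap_pos (ω / 2 + (2 ^ k - 1) * c) (by linarith) (by linarith)]
    ring
  rcases lt_or_ge ω (-(2 * c)) with hω'' | hω''
  · rw [hm.apply_half_eq_add_one_of_band_neg hc hω' hω'',
      hm.gap_pos (ω / 2 + (2 ^ k - 1) * c) (by linarith) (by linarith)]
    ring
  · rw [hm.center ω hω'' (by linarith), hm.center (ω / 2) (by linarith) (by linarith),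
      hm.edge_pos (ω / 2 + (2 ^ k - 1) * c) (by linarith) (by linarith)]

end IsBaggettMultiplicity

/-- Baggett's multiplicity functions `m_k` for dilation `d = 2` satisfy the
consistency equation `m(ω) + 1 = m(ω/2) + m(ω/2 + π)` on `[-π, π)`. -/
theorem consistency_equation_dilation_two (k : ℕ) (hk : 2 ≤ k) (m : ℝ → ℤ)
    (hper : Function.Periodic m (2 * Real.pi))
    (h1 : ∀ ω : ℝ, -Real.pi ≤ ω → ω < -(((2:ℝ)^k - 2) * Real.pi) / ((2:ℝ)^k - 1) → m ω = 1)
    (h2 : ∀ ω : ℝ, -(((2:ℝ)^k - 2) * Real.pi) / ((2:ℝ)^k - 1) ≤ ω →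
      ω < -((2:ℝ)^(k-1) * Real.pi) / ((2:ℝ)^k - 1) → m ω = 0)
    (h3 : ∀ j : ℕ, 2 ≤ j → j ≤ k - 1 → ∀ ω : ℝ,
      -((2:ℝ)^j * Real.pi) / ((2:ℝ)^k - 1) ≤ ω →
      ω < -((2:ℝ)^(j-1) * Real.pi) / ((2:ℝ)^k - 1) → m ω = (k : ℤ) - j)
    (h4 : ∀ ω : ℝ, -(2 * Real.pi) / ((2:ℝ)^k - 1) ≤ ω →
      ω < (2 * Real.pi) / ((2:ℝ)^k - 1) → m ω = (k : ℤ) - 1)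
    (h5 : ∀ j : ℕ, 2 ≤ j → j ≤ k - 1 → ∀ ω : ℝ,
      ((2:ℝ)^(j-1) * Real.pi) / ((2:ℝ)^k - 1) ≤ ω →
      ω < ((2:ℝ)^j * Real.pi) / ((2:ℝ)^k - 1) → m ω = (k : ℤ) - j)
    (h6 : ∀ ω : ℝ, ((2:ℝ)^(k-1) * Real.pi) / ((2:ℝ)^k - 1) ≤ ω →
      ω < (((2:ℝ)^k - 2) * Real.pi) / ((2:ℝ)^k - 1) → m ω = 0)
    (h7 : ∀ ω : ℝ, (((2:ℝ)^k - 2) * Real.pi) / ((2:ℝ)^k - 1) ≤ ω → ω < Real.pi → m ω = 1) :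
    ∀ ω : ℝ, -Real.pi ≤ ω → ω < Real.pi →
      m ω + 1 = m (ω / 2) + m (ω / 2 + Real.pi) := by
  intro ω hω₁ hω₂
  have hD : (0 : ℝ) < 2 ^ k - 1 := by
    linarith [pow_le_pow_right₀ (one_le_two : (1 : ℝ) ≤ 2) hk]
  obtain ⟨c, hc, hπ⟩ : ∃ c : ℝ, 0 < c ∧ π = (2 ^ k - 1) * c :=
    ⟨π / (2 ^ k - 1), div_pos pi_pos hD, (mul_div_cancel₀ π hD.ne').symm⟩
  have hdiv (a : ℝ) : a * π / (2 ^ k - 1) = a * c := by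
    rw [hπ, mul_div_assoc, mul_div_cancel_left₀ c hD.ne']
  simp only [neg_div, hdiv] at h1 h2 h3 h4 h5 h6 h7
  rw [hπ] at h1 h7 hω₁ hω₂ ⊢
  have hm : IsBaggettMultiplicity k c m := ⟨h1, h2, h3, h4, h5, h6, h7⟩
  rcases lt_or_ge ω 0 with hω | hω
  · exact hm.consistency_of_neg hk hc hω₁ hω
  · rw [← hper.sub_eq (ω / 2 + (2 ^ k - 1) * c), hπ,
      show ω / 2 + (2 ^ k - 1) * c - 2 * ((2 ^ k - 1) * c) = ω / 2 - (2 ^ k - 1) * c by ring]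
    exact hm.consistency_of_nonneg hk hc hω hω₂
end

section
/- Let $d \geq 3$ and $k \geq 2$ be integers, and let $m_k^d: [-\pi,\pi) \to \mathbb{Z}_{\geq 0}$ be defined piecewise by: $m_k^d = 0$ on $[-\pi, \frac{-d^{k-2}(d-1)2\pi}{d^k-1})$; $m_k^d = k-j$ on $[\frac{-d^{j-1}(d-1)2\pi}{d^k-1}, \frac{-d^{j-2}(d-1)2\pi}{d^k-1})$ for $j = 2,\dots,k-1$; $m_k^d = k-1$ on $[\frac{-(d-1)2\pi}{d^k-1}, \frac{2\pi}{d^k-1})$; $m_k^d = k-j$ on $[\frac{d^{j-2}2\pi}{d^k-1}, \frac{d^{j-1}2\pi}{d^k-1})$ for $j=2,\dots,k-1$; $m_k^d = 0$ on $[\frac{d^{k-2}2\pi}{d^k-1}, \frac{2\pi}{d} - \frac{(d-1)2\pi}{d(d^k-1)})$; $m_k^d = 1$ on $[\frac{2\pi}{d} - \frac{(d-1)2\pi}{d(d^k-1)}, \frac{2\pi}{d} + \frac{2\pi}{d(d^k-1)})$; and $m_k^d = 0$ on $[\frac{2\pi}{d} + \frac{2\pi}{d(d^k-1)}, \pi)$.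 Extend $m_k^d$ $2\pi$-periodically to $\mathbb{R}$. Then $m_k^d$ satisfies the consistency equation $m_k^d(\omega) + 1 = \sum_{i=0}^{d-1} m_k^d(\omega/d + 2\pi i/d)$ for all $\omega \in [-\pi,\pi)$. -/
private lemma find_pow_le (D b x : ℝ) :
    ∀ n : ℕ, b ≤ x → x < D ^ n * b →
      ∃ j : ℕ, j + 1 ≤ n ∧ D ^ j * b ≤ x ∧ x < D ^ (j+1) * b := by
  intro n
  induction n with
  | zero => intro h1 h2; rw [pow_zero, one_mul] at h2; exact absurd h1 (not_le.mpr h2)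
  | succ n ih =>
    intro h1 h2
    by_cases hc : x < D ^ n * b
    · obtain ⟨j, hj, h3, h4⟩ := ih h1 hc
      exact ⟨j, by omega, h3, h4⟩
    · exact ⟨n, le_refl _, not_lt.mp hc, h2⟩

private lemma find_pow_lt (D b x : ℝ) :
    ∀ n : ℕ, b < x → x ≤ D ^ n * b →
      ∃ j : ℕ, j + 1 ≤ n ∧ D ^ j * b < x ∧ x ≤ D ^ (j+1) * b := by
  intro n
  induction n with
  | zero => intro h1 h2; rw [pow_zero, one_mul] at h2; exact absurd h1 (not_lt.mpr h2)
  | succ n ih =>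
    intro h1 h2
    by_cases hc : x ≤ D ^ n * b
    · obtain ⟨j, hj, h3, h4⟩ := ih h1 hc
      exact ⟨j, by omega, h3, h4⟩
    · exact ⟨n, le_refl _, not_le.mp hc, h2⟩

set_option maxHeartbeats 1000000 in
/-- The multiplicity functions `m_k^d` for dilation `d ≥ 3` satisfy the consistency
equation `m(ω) + 1 = ∑_{i=0}^{d-1} m(ω/d + 2πi/d)` on `[-π, π)`. -/
theorem consistency_equation_dilation_d (d k : ℕ) (hd : 3 ≤ d) (hk : 2 ≤ k) (m : ℝ → ℤ)
    (hper : Function.Periodic m (2 * Real.pi))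
    (h1 : ∀ ω : ℝ, -Real.pi ≤ ω →
      ω < -((d:ℝ)^(k-2) * ((d:ℝ) - 1) * (2 * Real.pi)) / ((d:ℝ)^k - 1) → m ω = 0)
    (h2 : ∀ j : ℕ, 2 ≤ j → j ≤ k - 1 → ∀ ω : ℝ,
      -((d:ℝ)^(j-1) * ((d:ℝ) - 1) * (2 * Real.pi)) / ((d:ℝ)^k - 1) ≤ ω →
      ω < -((d:ℝ)^(j-2) * ((d:ℝ) - 1) * (2 * Real.pi)) / ((d:ℝ)^k - 1) → m ω = (k : ℤ) - j)
    (h3 : ∀ ω : ℝ, -(((d:ℝ) - 1) * (2 * Real.pi)) / ((d:ℝ)^k - 1) ≤ ω →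
      ω < (2 * Real.pi) / ((d:ℝ)^k - 1) → m ω = (k : ℤ) - 1)
    (h4 : ∀ j : ℕ, 2 ≤ j → j ≤ k - 1 → ∀ ω : ℝ,
      ((d:ℝ)^(j-2) * (2 * Real.pi)) / ((d:ℝ)^k - 1) ≤ ω →
      ω < ((d:ℝ)^(j-1) * (2 * Real.pi)) / ((d:ℝ)^k - 1) → m ω = (k : ℤ) - j)
    (h5 : ∀ ω : ℝ, ((d:ℝ)^(k-2) * (2 * Real.pi)) / ((d:ℝ)^k - 1) ≤ ω →
      ω < 2 * Real.pi / (d:ℝ) - (((d:ℝ) - 1) * (2 * Real.pi)) / ((d:ℝ) * ((d:ℝ)^k - 1)) →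
      m ω = 0)
    (h6 : ∀ ω : ℝ,
      2 * Real.pi / (d:ℝ) - (((d:ℝ) - 1) * (2 * Real.pi)) / ((d:ℝ) * ((d:ℝ)^k - 1)) ≤ ω →
      ω < 2 * Real.pi / (d:ℝ) + (2 * Real.pi) / ((d:ℝ) * ((d:ℝ)^k - 1)) → m ω = 1)
    (h7 : ∀ ω : ℝ,
      2 * Real.pi / (d:ℝ) + (2 * Real.pi) / ((d:ℝ) * ((d:ℝ)^k - 1)) ≤ ω → ω < Real.pi →
      m ω = 0) :
    ∀ ω : ℝ, -Real.pi ≤ ω → ω < Real.pi →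
      m ω + 1 = ∑ i ∈ Finset.range d, m (ω / (d:ℝ) + 2 * Real.pi * (i:ℝ) / (d:ℝ)) := by
  intro ω hω1 hω2
  obtain ⟨e, rfl⟩ : ∃ e, d = e + 3 := ⟨d - 3, by omega⟩
  obtain ⟨k0, rfl⟩ : ∃ k0, k = k0 + 2 := ⟨k - 2, by omega⟩
  clear hd hk
  simp only [Nat.add_sub_cancel] at h1 h5
  set π : ℝ := Real.pi with hπdef
  set D : ℝ := ((e + 3 : ℕ) : ℝ) with hDdef
  have hD : 3 ≤ D := by
    rw [hDdef]; push_cast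
    have : (0:ℝ) ≤ (e:ℝ) := Nat.cast_nonneg e
    linarith
  have hD0 : (0:ℝ) < D := by linarith
  have hπ : 0 < π := Real.pi_pos
  have hpow1 : ∀ n : ℕ, (1:ℝ) ≤ D ^ n := fun n => one_le_pow₀ (by linarith)
  have hA : (1:ℝ) ≤ D ^ k0 := hpow1 k0
  have hApos : (0:ℝ) < D ^ k0 := by linarith
  have hpowk : D ^ (k0+2) = D ^ k0 * D ^ 2 := by rw [pow_add]
  have hAD : (3:ℝ) ≤ D ^ k0 * D := by
    have := mul_le_mul_of_nonneg_right hA hD0.le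
    rw [one_mul] at this; linarith
  have hAD2c : D ^ 2 ≤ D ^ k0 * D ^ 2 := by
    have := mul_le_mul_of_nonneg_right hA (by positivity : (0:ℝ) ≤ D ^ 2)
    rw [one_mul] at this; exact this
  have hAD2 : (9:ℝ) ≤ D ^ k0 * D ^ 2 := by linarith [hAD2c, sq_nonneg (D - 3)]
  have hX0 : (0:ℝ) < D ^ (k0+2) - 1 := by rw [hpowk]; linarith [hAD2]
  set c : ℝ := 2 * π / (D ^ (k0+2) - 1) with hcdef
  have hc0 : 0 < c := div_pos (by linarith) hX0
  have hπc : (D ^ k0 * D ^ 2 - 1) * c = 2 * π := by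
    rw [hcdef, ← hpowk]; field_simp
  have hπcD : (D ^ k0 * D ^ 2 - 1) * c * D = 2 * π * D := by rw [hπc]
  have hbA : ∀ y : ℝ, y * (2 * π) / (D ^ (k0+2) - 1) = y * c := by
    intro y; rw [hcdef, mul_div_assoc]
  have hb_lo : 2 * π / D - (D - 1) * (2 * π) / (D * (D ^ (k0+2) - 1))
      = (2 * π - (D - 1) * c) / D := by
    rw [hcdef]; field_simp
  have hb_hi : 2 * π / D + 2 * π / (D * (D ^ (k0+2) - 1)) = (2 * π + c) / D := by
    rw [hcdef]; field_simp
  -- the piecewise description, with cleared denominators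
  have M1 : ∀ x : ℝ, D * (-π) ≤ D * x → D * x < D * (-(D ^ k0 * (D - 1) * c)) → m x = 0 := by
    intro x u1 u2
    refine h1 x (le_of_mul_le_mul_left u1 hD0) ?_
    rw [neg_div, hbA]
    exact lt_of_mul_lt_mul_left u2 hD0.le
  have M2 : ∀ j0 : ℕ, ∀ x : ℝ, j0 + 1 ≤ k0 →
      D * (-(D ^ (j0+1) * (D - 1) * c)) ≤ D * x →
      D * x < D * (-(D ^ j0 * (D - 1) * c)) → m x = (k0 : ℤ) - j0 := by
    intro j0 x hj u1 u2
    have lo : -(D ^ (j0+2-1) * (D - 1) * (2 * π)) / (D ^ (k0+2) - 1) ≤ x := by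
      rw [show j0+2-1 = j0+1 from by omega, neg_div, hbA]
      exact le_of_mul_le_mul_left u1 hD0
    have hi : x < -(D ^ (j0+2-2) * (D - 1) * (2 * π)) / (D ^ (k0+2) - 1) := by
      rw [show j0+2-2 = j0 from by omega, neg_div, hbA]
      exact lt_of_mul_lt_mul_left u2 hD0.le
    have := h2 (j0+2) (by omega) (by omega) x lo hi
    rw [this]; push_cast; ring
  have M3 : ∀ x : ℝ, D * (-((D - 1) * c)) ≤ D * x → D * x < D * c → m x = (k0 : ℤ) + 1 := by
    intro x u1 u2
    have lo : -((D - 1) * (2 * π)) / (D ^ (k0+2) - 1) ≤ x := by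
      rw [neg_div, hbA]
      exact le_of_mul_le_mul_left u1 hD0
    have hi : x < 2 * π / (D ^ (k0+2) - 1) := by
      rw [← hcdef]
      exact lt_of_mul_lt_mul_left u2 hD0.le
    have := h3 x lo hi
    rw [this]; push_cast; ring
  have M4 : ∀ j0 : ℕ, ∀ x : ℝ, j0 + 1 ≤ k0 →
      D * (D ^ j0 * c) ≤ D * x →
      D * x < D * (D ^ (j0+1) * c) → m x = (k0 : ℤ) - j0 := by
    intro j0 x hj u1 u2
    have lo : D ^ (j0+2-2) * (2 * π) / (D ^ (k0+2) - 1) ≤ x := by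
      rw [show j0+2-2 = j0 from by omega, hbA]
      exact le_of_mul_le_mul_left u1 hD0
    have hi : x < D ^ (j0+2-1) * (2 * π) / (D ^ (k0+2) - 1) := by
      rw [show j0+2-1 = j0+1 from by omega, hbA]
      exact lt_of_mul_lt_mul_left u2 hD0.le
    have := h4 (j0+2) (by omega) (by omega) x lo hi
    rw [this]; push_cast; ring
  have M5 : ∀ x : ℝ, D * (D ^ k0 * c) ≤ D * x → D * x < 2 * π - (D - 1) * c → m x = 0 := by
    intro x u1 u2
    apply h5 x
    · rw [hbA]
      exact le_of_mul_le_mul_left u1 hD0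
    · rw [hb_lo, lt_div_iff₀ hD0]
      linarith [mul_comm x D]
  have M6 : ∀ x : ℝ, 2 * π - (D - 1) * c ≤ D * x → D * x < 2 * π + c → m x = 1 := by
    intro x u1 u2
    apply h6 x
    · rw [hb_lo, div_le_iff₀ hD0]
      linarith [mul_comm x D]
    · rw [hb_hi, lt_div_iff₀ hD0]
      linarith [mul_comm x D]
  have M7 : ∀ x : ℝ, 2 * π + c ≤ D * x → x < π → m x = 0 := by
    intro x u1 u2
    apply h7 x _ u2
    rw [hb_hi, div_le_iff₀ hD0]
    linarith [mul_comm x D]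
  -- products of the arguments with D
  have hDx0 : D * (ω / D) = ω := by field_simp
  have hDx1 : D * (ω / D + 2 * π / D) = ω + 2 * π := by field_simp; try ring
  have hDy : D * (ω / D - 2 * π / D) = ω - 2 * π := by field_simp; try ring
  have hx_top : m (ω / D + 2 * π * ((e + 2 : ℕ) : ℝ) / D) = m (ω / D - 2 * π / D) := by
    rw [show ω / D + 2 * π * ((e + 2 : ℕ) : ℝ) / D = (ω / D - 2 * π / D) + 2 * π by
      rw [hDdef]; push_cast
      have h3' : ((e:ℝ) + 3) ≠ 0 := by positivity
      field_simp
      try ring]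
    exact hper _
  -- global inequalities
  have hRHS0 : 0 ≤ 2 * π - (D - 1) * c := by
    have h := mul_nonneg (show (0:ℝ) ≤ D ^ k0 * D - 1 by linarith)
      (by positivity : (0:ℝ) ≤ D * c)
    linarith [hπc, h]
  have hAc : c ≤ D ^ k0 * c := by
    have := mul_le_mul_of_nonneg_right hA hc0.le
    rw [one_mul] at this; exact this
  -- the value at x₁
  have Hx1_lo : ω < -((D - 1) * c) → m (ω / D + 2 * π / D) = 0 := by
    intro h
    apply M5
    · rw [hDx1]
      have hq : (0:ℝ) ≤ (D ^ k0 * D * (D - 2) - 1) * c := by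
        refine mul_nonneg ?_ hc0.le
        linarith [mul_le_mul hAD (show (1:ℝ) ≤ D - 2 by linarith)
          (by norm_num) (by positivity : (0:ℝ) ≤ D ^ k0 * D)]
      linarith [hπc, hω1, hq]
    · rw [hDx1]; linarith
  have Hx1_mid : -((D - 1) * c) ≤ ω → ω < c → m (ω / D + 2 * π / D) = 1 := by
    intro u1 u2
    apply M6
    · rw [hDx1]; linarith
    · rw [hDx1]; linarith
  have Hx1_hi : c ≤ ω → m (ω / D + 2 * π / D) = 0 := by
    intro u1
    apply M7
    · rw [hDx1]; linarith
    · rw [← add_div, div_lt_iff₀ hD0]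
      linarith [hω2, mul_nonneg (show (0:ℝ) ≤ D - 3 by linarith) hπ.le]
  -- the value at x_{d-1}
  have Hxd_lo : D * ω < 2 * π - (D - 1) * c →
      m (ω / D + 2 * π * ((e + 2 : ℕ) : ℝ) / D) = 0 := by
    intro u
    rw [hx_top]
    apply M1
    · rw [hDy]
      linarith [hω1, mul_nonneg (show (0:ℝ) ≤ D - 3 by linarith) hπ.le]
    · rw [hDy]
      refine lt_of_mul_lt_mul_right ?_ hD0.le
      linarith [u, hπc, hπcD]
  have Hxd_hi : 2 * π - (D - 1) * c ≤ D * ω →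
      m (ω / D + 2 * π * ((e + 2 : ℕ) : ℝ) / D) = 1 := by
    intro u
    rw [hx_top]
    rcases Nat.eq_zero_or_pos k0 with hk0 | hk0
    · subst hk0
      have v := M3 (ω / D - 2 * π / D) ?_ ?_
      · rw [v]; norm_num
      · rw [hDy]
        refine le_of_mul_le_mul_right ?_ hD0
        linarith [u, hπc, hπcD]
      · rw [hDy]
        linarith [hω2, hπ, mul_pos hD0 hc0]
    · obtain ⟨n, rfl⟩ : ∃ n, k0 = n + 1 := ⟨k0 - 1, by omega⟩
      have v := M2 n (ω / D - 2 * π / D) (by omega) ?_ ?_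
      · rw [v]; push_cast; ring
      · rw [hDy]
        refine le_of_mul_le_mul_right ?_ hD0
        linarith [u, hπc, hπcD]
      · rw [hDy]
        -- ω - 2π < -(D^(n+1)(D-1)c) since ω < π ≤ 2π - D^(n+1)(D-1)c
        have hq : (0:ℝ) ≤ (D ^ (n+1) * D ^ 2 - 2 * (D ^ (n+1) * D) + 2 * D ^ (n+1) - 1) * c := by
          refine mul_nonneg ?_ hc0.le
          linarith [mul_le_mul_of_nonneg_right (hpow1 (n+1))
            (show (0:ℝ) ≤ D ^ 2 - 2 * D + 2 by linarith [sq_nonneg (D - 1)]),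
            sq_nonneg (D - 1)]
        linarith [hω2, hπc, hq,
          show D * (D ^ n * ((D - 1) * c)) = D ^ (n+1) * ((D - 1) * c) from by ring]
  -- splitting the sum
  have hsplit : ∑ i ∈ Finset.range (e+3), m (ω / D + 2 * π * (i:ℝ) / D)
      = m (ω / D) + m (ω / D + 2 * π / D)
        + (∑ i ∈ Finset.Ico 2 (e+2), m (ω / D + 2 * π * (i:ℝ) / D))
        + m (ω / D + 2 * π * ((e + 2 : ℕ) : ℝ) / D) := by
    rw [Finset.range_eq_Ico]
    rw [Finset.sum_eq_sum_Ico_succ_bot (by omega : 0 < e+3)]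
    rw [Finset.sum_eq_sum_Ico_succ_bot (by omega : 0+1 < e+3)]
    rw [show e+3 = (e+2)+1 from by omega]
    rw [Finset.sum_Ico_succ_top (by omega : 0+1+1 ≤ e+2)]
    norm_num
    ring
  have hmid : ∑ i ∈ Finset.Ico 2 (e+2), m (ω / D + 2 * π * (i:ℝ) / D) = 0 := by
    apply Finset.sum_eq_zero
    intro i hi
    rw [Finset.mem_Ico] at hi
    have hi2 : (2:ℝ) ≤ (i:ℝ) := by exact_mod_cast hi.1
    have hie : (i:ℝ) ≤ D - 2 := by
      have : (i:ℝ) ≤ (e:ℝ) + 1 := by exact_mod_cast Nat.lt_succ_iff.mp hi.2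
      rw [hDdef]; push_cast; linarith
    have hDx : D * (ω / D + 2 * π * (i:ℝ) / D) = ω + 2 * π * (i:ℝ) := by
      field_simp; try ring
    rcases lt_or_ge (ω / D + 2 * π * (i:ℝ) / D) π with hlt | hge
    · refine M7 _ ?_ hlt
      rw [hDx]
      have hcπ : 4 * c ≤ π := by
        linarith [hπc, mul_nonneg (show (0:ℝ) ≤ D ^ k0 * D ^ 2 - 9 by linarith) hc0.le]
      linarith [hω1, hπ, mul_le_mul_of_nonneg_left hi2 (by positivity : (0:ℝ) ≤ 2 * π), hcπ]
    · have hxeq : m (ω / D + 2 * π * (i:ℝ) / D)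
          = m (ω / D + 2 * π * (i:ℝ) / D - 2 * π) := by
        conv_lhs => rw [show ω / D + 2 * π * (i:ℝ) / D
          = (ω / D + 2 * π * (i:ℝ) / D - 2 * π) + 2 * π from by ring]
        rw [hper]
      rw [hxeq]
      apply M1
      · rw [mul_sub, hDx]
        linarith [mul_le_mul_of_nonneg_left hge hD0.le, hDx]
      · rw [mul_sub, hDx]
        have hi2π : 2 * π * (i:ℝ) ≤ 2 * π * (D - 2) :=
          mul_le_mul_of_nonneg_left hie (by positivity)
        have hq9 : (0:ℝ) ≤ (D ^ k0 * D ^ 2 - 9) * c :=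
          mul_nonneg (by linarith) hc0.le
        linarith [hi2π, hω2, hπc, hq9, mul_pos (mul_pos hApos hD0) hc0]
  rw [hsplit, hmid]
  -- main case analysis on ω
  rcases lt_or_ge ω (-(D ^ k0 * (D - 1) * c)) with hc1 | hc1
  · -- Case C : leftmost region, m ω = 0
    have vω : m ω = 0 :=
      M1 ω (mul_le_mul_of_nonneg_left hω1 hD0.le)
        (mul_lt_mul_of_pos_left hc1 hD0)
    have v1 : m (ω / D + 2 * π / D) = 0 := by
      apply Hx1_lo
      have := mul_le_mul_of_nonneg_right hA
        (mul_nonneg (show (0:ℝ) ≤ D - 1 by linarith) hc0.le)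
      rw [one_mul] at this
      linarith [hc1, this]
    have vd : m (ω / D + 2 * π * ((e + 2 : ℕ) : ℝ) / D) = 0 := by
      apply Hxd_lo
      have h' : D * ω < D * (-(D ^ k0 * (D - 1) * c)) := mul_lt_mul_of_pos_left hc1 hD0
      have q1 : (0:ℝ) ≤ (D ^ k0 * D * c) * (D - 1) :=
        mul_nonneg (by positivity) (by linarith)
      have q2 : (0:ℝ) ≤ (D * c) * (D ^ k0 * D - 1) :=
        mul_nonneg (by positivity) (by linarith [hAD])
      linarith [h', hπc, q1, q2]
    rcases Nat.eq_zero_or_pos k0 with hk0 | hk0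
    · subst hk0
      have v0 : m (ω / D) = (0:ℤ) + 1 := by
        apply M3
        · rw [hDx0]
          refine le_of_mul_le_mul_right ?_ hD0
          have q : (0:ℝ) ≤ (D * c) * (D - 1) ^ 2 :=
            mul_nonneg (by positivity) (sq_nonneg _)
          linarith [mul_le_mul_of_nonneg_left hω1 hD0.le, hπcD, q]
        · rw [hDx0]
          simp only [pow_zero, one_mul] at hc1
          linarith [hc1, mul_pos hD0 hc0, mul_nonneg (show (0:ℝ) ≤ D - 1 by linarith) hc0.le]
      rw [vω, v0, v1, vd]; norm_num
    · obtain ⟨n, rfl⟩ : ∃ n, k0 = n + 1 := ⟨k0 - 1, by omega⟩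
      have v0 : m (ω / D) = ((n:ℤ) + 1) - n := by
        have := M2 n (ω / D) (by omega) ?_ ?_
        · rw [this]; push_cast; ring
        · rw [hDx0]
          -- -(D^(n+2)(D-1)c) ≤ ω  since  -π ≤ ω and π ≤ D^(n+2)(D-1)c
          have hq : (0:ℝ) ≤ (D ^ (n+1) * (D-1) ^ 2 - D ^ (n+1) + 1) * c := by
            refine mul_nonneg ?_ hc0.le
            have t : (0:ℝ) ≤ D ^ (n+1) * ((D-1) ^ 2 - 1) :=
              mul_nonneg (by positivity) (by nlinarith [hD])
            linarith [t]
          linarith [hω1, hπc, hq]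
        · rw [hDx0]
          linarith [hc1,
            show D * (D ^ n * ((D - 1) * c)) = D ^ (n+1) * ((D - 1) * c) from by ring]
      rw [vω, v0, v1, vd]; push_cast; ring
  rcases lt_or_ge ω (-((D - 1) * c)) with hb1 | hb1
  · -- Case B : negative geometric family
    obtain ⟨j0, hj0, hf1, hf2⟩ := find_pow_lt D ((D - 1) * c) (-ω) k0
      (by linarith) (by linarith [hc1])
    have vω : m ω = (k0:ℤ) - j0 := by
      apply M2 j0 ω hj0
      · linarith [mul_le_mul_of_nonneg_left hf2 hD0.le]
      · linarith [mul_lt_mul_of_pos_left hf1 hD0]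
    have v1 : m (ω / D + 2 * π / D) = 0 := by
      apply Hx1_lo
      have := mul_le_mul_of_nonneg_right (hpow1 j0)
        (mul_nonneg (show (0:ℝ) ≤ D - 1 by linarith) hc0.le)
      rw [one_mul] at this
      linarith [hf1, this]
    have hωneg : ω < 0 := by
      linarith [hf1, mul_pos (show (0:ℝ) < D ^ j0 by positivity)
        (mul_pos (show (0:ℝ) < D - 1 by linarith) hc0)]
    have vd : m (ω / D + 2 * π * ((e + 2 : ℕ) : ℝ) / D) = 0 := by
      apply Hxd_lo
      linarith [hRHS0, mul_pos hD0 (show (0:ℝ) < -ω by linarith)]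
    rcases Nat.eq_zero_or_pos j0 with hj00 | hj00
    · subst hj00
      have v0 : m (ω / D) = (k0:ℤ) + 1 := by
        apply M3
        · rw [hDx0]
          linarith [hf2, show D ^ (0+1) * ((D - 1) * c) = D * ((D - 1) * c) from by ring]
        · rw [hDx0]; linarith [hωneg, mul_pos hD0 hc0]
      rw [vω, v0, v1, vd]; push_cast; ring
    · obtain ⟨n, rfl⟩ : ∃ n, j0 = n + 1 := ⟨j0 - 1, by omega⟩
      have v0 : m (ω / D) = (k0:ℤ) - n := by
        apply M2 n (ω / D) (by omega)
        · rw [hDx0]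
          linarith [hf2,
            show D ^ (n+1+1) * ((D - 1) * c) = D * (D ^ (n+1) * ((D - 1) * c)) from by ring]
        · rw [hDx0]
          linarith [hf1,
            show D ^ (n+1) * ((D - 1) * c) = D * (D ^ n * ((D - 1) * c)) from by ring]
      rw [vω, v0, v1, vd]; push_cast; ring
  rcases lt_or_ge ω c with ha1 | ha1
  · -- Case A : central region
    have vω : m ω = (k0:ℤ) + 1 :=
      M3 ω (mul_le_mul_of_nonneg_left hb1 hD0.le) (mul_lt_mul_of_pos_left ha1 hD0)
    have v0 : m (ω / D) = (k0:ℤ) + 1 := by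
      apply M3
      · rw [hDx0]
        have := mul_le_mul_of_nonneg_right (show (1:ℝ) ≤ D by linarith)
          (mul_nonneg (show (0:ℝ) ≤ D - 1 by linarith) hc0.le)
        rw [one_mul] at this
        linarith [hb1, this]
      · rw [hDx0]
        have t := mul_le_mul_of_nonneg_right (show (1:ℝ) ≤ D by linarith) hc0.le
        rw [one_mul] at t
        linarith [ha1, t]
    have v1 : m (ω / D + 2 * π / D) = 1 := Hx1_mid hb1 ha1
    have vd : m (ω / D + 2 * π * ((e + 2 : ℕ) : ℝ) / D) = 0 := by
      apply Hxd_lo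
      have h' : D * ω < D * c := mul_lt_mul_of_pos_left ha1 hD0
      have hq : (0:ℝ) ≤ (D ^ k0 * D - 2) * (D * c) :=
        mul_nonneg (by linarith [hAD]) (by positivity)
      linarith [h', hq, hπc]
    rw [vω, v0, v1, vd]; ring
  rcases lt_or_ge ω (D ^ k0 * c) with hd1 | hd1
  · -- Case D : positive geometric family
    obtain ⟨j0, hj0, hf1, hf2⟩ := find_pow_le D c ω k0 ha1 hd1
    have vω : m ω = (k0:ℤ) - j0 :=
      M4 j0 ω hj0 (mul_le_mul_of_nonneg_left hf1 hD0.le) (mul_lt_mul_of_pos_left hf2 hD0)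
    have v1 : m (ω / D + 2 * π / D) = 0 := Hx1_hi ha1
    have vd : m (ω / D + 2 * π * ((e + 2 : ℕ) : ℝ) / D) = 0 := by
      apply Hxd_lo
      have h' : D * ω < D * (D ^ k0 * c) := mul_lt_mul_of_pos_left hd1 hD0
      have hq : (0:ℝ) ≤ (D ^ k0 * D - D ^ k0 - 1) * (D * c) := by
        refine mul_nonneg ?_ (by positivity)
        have t := mul_le_mul_of_nonneg_right hA (show (0:ℝ) ≤ D - 2 by linarith)
        rw [one_mul] at t
        linarith [t, hA]
      linarith [h', hq, hπc]
    rcases Nat.eq_zero_or_pos j0 with hj00 | hj00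
    · subst hj00
      have v0 : m (ω / D) = (k0:ℤ) + 1 := by
        apply M3
        · rw [hDx0]
          linarith [ha1, hc0, mul_nonneg (mul_nonneg hD0.le
            (show (0:ℝ) ≤ D - 1 by linarith)) hc0.le]
        · rw [hDx0]
          linarith [hf2, show D ^ (0+1) * c = D * c from by ring]
      rw [vω, v0, v1, vd]; push_cast; ring
    · obtain ⟨n, rfl⟩ : ∃ n, j0 = n + 1 := ⟨j0 - 1, by omega⟩
      have v0 : m (ω / D) = (k0:ℤ) - n := by
        apply M4 n (ω / D) (by omega)
        · rw [hDx0]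
          linarith [hf1, show D ^ (n+1) * c = D * (D ^ n * c) from by ring]
        · rw [hDx0]
          linarith [hf2, show D ^ (n+1+1) * c = D * (D ^ (n+1) * c) from by ring]
      rw [vω, v0, v1, vd]; push_cast; ring
  rcases lt_or_ge (D * ω) (2 * π - (D - 1) * c) with he1 | he1
  · -- Case E : between top of positive family and the bump
    have vω : m ω = 0 := M5 ω (mul_le_mul_of_nonneg_left hd1 hD0.le) he1
    have v1 : m (ω / D + 2 * π / D) = 0 := Hx1_hi (by linarith [hAc])
    have vd : m (ω / D + 2 * π * ((e + 2 : ℕ) : ℝ) / D) = 0 := Hxd_lo he1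
    rcases Nat.eq_zero_or_pos k0 with hk0 | hk0
    · subst hk0
      have v0 : m (ω / D) = (0:ℤ) + 1 := by
        apply M3
        · rw [hDx0]
          simp only [pow_zero, one_mul] at hd1
          linarith [hd1, hc0, mul_nonneg (mul_nonneg hD0.le
            (show (0:ℝ) ≤ D - 1 by linarith)) hc0.le]
        · rw [hDx0]
          refine lt_of_mul_lt_mul_right ?_ hD0.le
          linarith [he1, hπc, mul_nonneg hD0.le hc0.le]
      rw [vω, v0, v1, vd]; norm_num
    · obtain ⟨n, rfl⟩ : ∃ n, k0 = n + 1 := ⟨k0 - 1, by omega⟩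
      have v0 : m (ω / D) = ((n:ℤ) + 1) - n := by
        have := M4 n (ω / D) (by omega) ?_ ?_
        · rw [this]; push_cast; ring
        · rw [hDx0]
          linarith [hd1, show D ^ (n+1) * c = D * (D ^ n * c) from by ring]
        · rw [hDx0]
          refine lt_of_mul_lt_mul_right ?_ hD0.le
          linarith [he1, hπc, mul_nonneg hD0.le hc0.le,
            show (D * (D ^ (n+1) * c)) * D = D ^ (n+1) * (D ^ 2 * c) from by ring]
      rw [vω, v0, v1, vd]; push_cast; ring
  rcases lt_or_ge (D * ω) (2 * π + c) with hf1' | hf1'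
  · -- Case F : the bump
    have vω : m ω = 1 := M6 ω he1 hf1'
    have v1 : m (ω / D + 2 * π / D) = 0 := by
      apply Hx1_hi
      refine le_of_mul_le_mul_right ?_ hD0
      have hq : (0:ℝ) ≤ (D ^ k0 * D - 2) * (D * c) :=
        mul_nonneg (by linarith [hAD]) (by positivity)
      linarith [he1, hq, hπc]
    have vd : m (ω / D + 2 * π * ((e + 2 : ℕ) : ℝ) / D) = 1 := Hxd_hi he1
    rcases Nat.eq_zero_or_pos k0 with hk0 | hk0
    · subst hk0
      have v0 : m (ω / D) = (0:ℤ) + 1 := by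
        apply M3
        · rw [hDx0]
          refine le_of_mul_le_mul_right ?_ hD0
          have q3 : (0:ℝ) ≤ (D * c) * (D ^ 2 - 1) :=
            mul_nonneg (by positivity) (by nlinarith [hD])
          linarith [he1, hπc, q3]
        · rw [hDx0]
          refine lt_of_mul_lt_mul_right ?_ hD0.le
          linarith [hf1', hπc]
      rw [vω, v0, v1, vd]; norm_num
    · obtain ⟨n, rfl⟩ : ∃ n, k0 = n + 1 := ⟨k0 - 1, by omega⟩
      have v0 : m (ω / D) = ((n:ℤ) + 1) - n := by
        have := M4 n (ω / D) (by omega) ?_ ?_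
        · rw [this]; push_cast; ring
        · rw [hDx0]
          refine le_of_mul_le_mul_right ?_ hD0
          have hq : (0:ℝ) ≤ (D ^ (n+1) * (D - 1) - 1) * (D * c) := by
            refine mul_nonneg ?_ (by positivity)
            have t := mul_le_mul_of_nonneg_right (hpow1 (n+1))
              (show (0:ℝ) ≤ D - 1 by linarith)
            rw [one_mul] at t
            linarith [t]
          linarith [he1, hq, hπc,
            show (D * (D ^ n * c)) * D = D ^ (n+1) * (D * c) from by ring]
        · rw [hDx0]
          refine lt_of_mul_lt_mul_right ?_ hD0.le
          linarith [hf1', hπc]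
      rw [vω, v0, v1, vd]; push_cast; ring
  · -- Case G : rightmost region
    have vω : m ω = 0 := M7 ω hf1' hω2
    have v1 : m (ω / D + 2 * π / D) = 0 := by
      apply Hx1_hi
      refine le_of_mul_le_mul_right ?_ hD0
      have hq : (0:ℝ) ≤ (D ^ k0 * D - 1) * (D * c) :=
        mul_nonneg (by linarith [hAD]) (by positivity)
      linarith [hf1', hq, hπc]
    have vd : m (ω / D + 2 * π * ((e + 2 : ℕ) : ℝ) / D) = 1 := by
      apply Hxd_hi
      linarith [hf1', mul_nonneg (show (0:ℝ) ≤ D - 1 by linarith) hc0.le, hc0]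
    have v0 : m (ω / D) = 0 := by
      apply M5
      · rw [hDx0]
        refine le_of_mul_le_mul_right ?_ hD0
        linarith [hf1', hπc]
      · rw [hDx0]
        have hq : (0:ℝ) ≤ (D ^ k0 * D ^ 2 - 2 * D + 1) * c := by
          refine mul_nonneg ?_ hc0.le
          linarith [hAD2c, sq_nonneg (D - 1)]
        linarith [hω2, hπc, hq]
    rw [vω, v0, v1, vd]; norm_num
end

section
/- Let $k \geq 2$ and define $E = \bigcup_{j=1}^{k-2}[-2^j\pi, -2^j\pi + \frac{2^j\pi}{2^k-1}) \cup [-\pi, \frac{-(2^k-2)\pi}{2^k-1}) \cup [\frac{-2^{k-1}\pi}{2^k-1}, \frac{2^{k-1}\pi}{2^k-1}) \cup [\frac{(2^k-2)\pi}{2^k-1}, \pi) \cup \bigcup_{j=1}^{k-2}[2^j\pi - \frac{2^j\pi}{2^k-1}, 2^j\pi)$. Then $E \subseteq 2E$, where $2E = \{2x : x \in E\}$. -/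
/-! With `c = π / (2 ^ k - 1)`, the set `E` consists of the dyadic towers
`2 ^ j • [-π, -π + c)` and `2 ^ j • [π - c, π)`, `0 ≤ j ≤ k - 2`, together with the centre
`[-r, r)`, `r = 2 ^ (k - 1) c`. Halving moves each tower interval one level down. The bottom
levels and the centre all lie in `[-2r, 2r)`, since `2r = 2 ^ k c = π + c`, so halving sends
them into the centre. -/

open Real Set

/-- The generalized scaling set `E` for dilation 2. -/
noncomputable def genScalingSet2 (k : ℕ) : Set ℝ :=
  (⋃ j ∈ Finset.Icc 1 (k - 2),
      Ico (-((2:ℝ)^j * π)) (-((2:ℝ)^j * π) + (2:ℝ)^j * π / ((2:ℝ)^k - 1))) ∪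
    Ico (-π) (-(((2:ℝ)^k - 2) * π) / ((2:ℝ)^k - 1)) ∪
    Ico (-((2:ℝ)^(k-1) * π) / ((2:ℝ)^k - 1)) (((2:ℝ)^(k-1) * π) / ((2:ℝ)^k - 1)) ∪
    Ico ((((2:ℝ)^k - 2) * π) / ((2:ℝ)^k - 1)) π ∪
    ⋃ j ∈ Finset.Icc 1 (k - 2),
      Ico ((2:ℝ)^j * π - (2:ℝ)^j * π / ((2:ℝ)^k - 1)) ((2:ℝ)^j * π)

section DyadicTower

variable {K : Type*} [Field K] [LinearOrder K] [IsStrictOrderedRing K]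

def dyadicTower (a b : K) (n : ℕ) : Set K :=
  ⋃ j ∈ Finset.Icc 1 n, Ico (2 ^ j * a) (2 ^ j * b)

theorem half_mem_Ico_union_dyadicTower {a b x : K} {n : ℕ} (hx : x ∈ dyadicTower a b n) :
    x / 2 ∈ Ico a b ∪ dyadicTower a b n := by
  obtain ⟨j, hj, hxj⟩ := mem_iUnion₂.1 hx
  obtain ⟨hj1, hjn⟩ := Finset.mem_Icc.1 hj
  obtain ⟨i, rfl⟩ := Nat.exists_eq_add_of_le' hj1
  have hhalf : x / 2 ∈ Ico (2 ^ i * a) (2 ^ i * b) := by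
    obtain ⟨hl, hr⟩ := hxj
    rw [pow_succ] at hl hr
    constructor <;> linarith
  rcases i.eq_zero_or_pos with rfl | hi
  · left; simpa using hhalf
  · right; exact mem_iUnion₂.2 ⟨i, Finset.mem_Icc.2 ⟨hi, by omega⟩, hhalf⟩

theorem one_le_two_pow_sub_one {k : ℕ} (hk : k ≠ 0) : (1 : K) ≤ 2 ^ k - 1 := by
  have : (2 : K) ^ 1 ≤ 2 ^ k := pow_le_pow_right₀ one_le_two (Nat.one_le_iff_ne_zero.2 hk)
  linarith [pow_one (2 : K)]

theorem two_mul_two_pow_pred_mul_div {k : ℕ} (hk : k ≠ 0) (a : K) :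
    2 * (2 ^ (k - 1) * (a / (2 ^ k - 1))) = a + a / (2 ^ k - 1) := by
  have hd : (2 : K) ^ k - 1 ≠ 0 := by linarith [one_le_two_pow_sub_one (K := K) hk]
  rw [← mul_assoc, ← pow_succ', Nat.sub_add_cancel (Nat.one_le_iff_ne_zero.2 hk)]
  field_simp
  ring

end DyadicTower

theorem genScalingSet2_eq {k : ℕ} (hk : k ≠ 0) :
    genScalingSet2 k =
      dyadicTower (-π) (-π + π / (2 ^ k - 1)) (k - 2) ∪ Ico (-π) (-π + π / (2 ^ k - 1)) ∪
        Ico (-(2 ^ (k - 1) * (π / (2 ^ k - 1)))) (2 ^ (k - 1) * (π / (2 ^ k - 1))) ∪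
        Ico (π - π / (2 ^ k - 1)) π ∪ dyadicTower (π - π / (2 ^ k - 1)) π (k - 2) := by
  have hd : (2 : ℝ) ^ k - 1 ≠ 0 := by linarith [one_le_two_pow_sub_one (K := ℝ) hk]
  have hneg : -(((2 : ℝ) ^ k - 2) * π) / (2 ^ k - 1) = -π + π / (2 ^ k - 1) := by
    field_simp; ring
  have hpos : ((2 : ℝ) ^ k - 2) * π / (2 ^ k - 1) = π - π / (2 ^ k - 1) := by
    field_simp; ring
  rw [genScalingSet2, hneg, hpos, neg_div]
  simp only [dyadicTower, mul_add, mul_sub, mul_neg, mul_div_assoc]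

/-- `E ⊆ 2E` for the generalized scaling set `E`. -/
theorem genScalingSet2_subset_dilate (k : ℕ) (hk : 2 ≤ k) :
    genScalingSet2 k ⊆ (fun x : ℝ => 2 * x) '' genScalingSet2 k := by
  intro x hx
  refine ⟨x / 2, ?_, mul_div_cancel₀ x two_ne_zero⟩
  have hk0 : k ≠ 0 := by omega
  have hπ := pi_pos
  have hr := two_mul_two_pow_pred_mul_div hk0 π
  have hc : 0 ≤ π / (2 ^ k - 1) :=
    div_nonneg hπ.le (by linarith [one_le_two_pow_sub_one (K := ℝ) hk0])
  rw [genScalingSet2_eq hk0] at hx ⊢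
  set c := π / (2 ^ k - 1)
  set r := 2 ^ (k - 1) * c
  have hcentre : ∀ y, -(π + c) ≤ y → y < π + c → y / 2 ∈ Ico (-r) r :=
    fun y h₁ h₂ ↦ ⟨by linarith, by linarith⟩
  rcases hx with (((hA | ⟨h₁, h₂⟩) | ⟨h₁, h₂⟩) | ⟨h₁, h₂⟩) | hF
  · rcases half_mem_Ico_union_dyadicTower hA with h | h
    · exact Or.inl (Or.inl (Or.inl (Or.inr h)))
    · exact Or.inl (Or.inl (Or.inl (Or.inl h)))
  · exact Or.inl (Or.inl (Or.inr (hcentre x (by linarith) (by linarith))))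
  · exact Or.inl (Or.inl (Or.inr (hcentre x (by linarith) (by linarith))))
  · exact Or.inl (Or.inl (Or.inr (hcentre x (by linarith) (by linarith))))
  · rcases half_mem_Ico_union_dyadicTower hF with h | h
    · exact Or.inl (Or.inr h)
    · exact Or.inr h
end

section
/- Let $k \geq 2$ and let $E$ be the set $E = \bigcup_{j=1}^{k-2}[-2^j\pi, -2^j\pi + \frac{2^j\pi}{2^k-1}) \cup [-\pi, \frac{-(2^k-2)\pi}{2^k-1}) \cup [\frac{-2^{k-1}\pi}{2^k-1}, \frac{2^{k-1}\pi}{2^k-1}) \cup [\frac{(2^k-2)\pi}{2^k-1}, \pi) \cup \bigcup_{j=1}^{k-2}[2^j\pi - \frac{2^j\pi}{2^k-1}, 2^j\pi)$. Then $2E \setminus E = [-2^{k-1}\pi, \frac{-(2^{2k-1}-2^k)\pi}{2^k-1}) \cup [\frac{-2^k\pi}{2^k-1}, -\pi) \cup [\frac{-(2^k-2)\pi}{2^k-1}, \frac{-2^{k-1}\pi}{2^k-1}) \cup [\frac{2^{k-1}\pi}{2^k-1}, \frac{(2^k-2)\pi}{2^k-1}) \cup [\pi, \frac{2^k\pi}{2^k-1})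 \cup [\frac{(2^{2k-1}-2^k)\pi}{2^k-1}, 2^{k-1}\pi)$. -/
open Real Set

/-- Left interval family. -/
noncomputable def wsL (k j : ℕ) : Set ℝ :=
  Ico (-((2:ℝ)^j * π)) (-((2:ℝ)^j * π) + (2:ℝ)^j * π / ((2:ℝ)^k - 1))

/-- Right interval family. -/
noncomputable def wsR (k j : ℕ) : Set ℝ :=
  Ico ((2:ℝ)^j * π - (2:ℝ)^j * π / ((2:ℝ)^k - 1)) ((2:ℝ)^j * π)

private lemma Ico_congr' {a b c d : ℝ} (h1 : a = c) (h2 : b = d) : Ico a b = Ico c d := by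
  rw [h1, h2]

private lemma diff_union_right_of_disjoint {α : Type*} {s t u : Set α} (h : Disjoint s u) :
    s \ (t ∪ u) = s \ t := by
  ext x
  simp only [mem_diff, mem_union, not_or]
  constructor
  · rintro ⟨hs, ht, _⟩; exact ⟨hs, ht⟩
  · rintro ⟨hs, ht⟩; exact ⟨hs, ht, fun hu => (Set.disjoint_left.mp h hs) hu⟩

private lemma Ico_sdiff_three (a b c d e f g h : ℝ) (hab : a ≤ b) (hcd : c ≤ d)
    (hef : e ≤ f) (hgh : g ≤ h) (hbc : b ≤ c) (hde : d ≤ e) (hfg : f ≤ g) :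
    Ico a h \ (Ico b c ∪ Ico d e ∪ Ico f g) = Ico a b ∪ Ico c d ∪ Ico e f ∪ Ico g h := by
  ext x
  simp only [Set.mem_diff, Set.mem_union, Set.mem_Ico, not_or, not_and, not_lt]
  constructor
  · rintro ⟨⟨hax, hxh⟩, ⟨h1, h2⟩, h3⟩
    rcases lt_or_ge x b with hb | hb
    · exact Or.inl (Or.inl (Or.inl ⟨hax, hb⟩))
    · have hc := h1 hb
      rcases lt_or_ge x d with hd | hd
      · exact Or.inl (Or.inl (Or.inr ⟨hc, hd⟩))
      · have he := h2 hd
        rcases lt_or_ge x f with hf | hf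
        · exact Or.inl (Or.inr ⟨he, hf⟩)
        · exact Or.inr ⟨h3 hf, hxh⟩
  · rintro (((⟨h1, h2⟩ | ⟨h1, h2⟩) | ⟨h1, h2⟩) | ⟨h1, h2⟩) <;>
      exact ⟨⟨by linarith, by linarith⟩, ⟨fun h => by linarith, fun h => by linarith⟩,
        fun h => by linarith⟩

private lemma twoE (k : ℕ) (hk : 2 ≤ k) :
    (fun x : ℝ => 2 * x) '' genScalingSet2 k =
      (⋃ j ∈ Finset.Icc 1 (k-1), wsL k j) ∪
      Ico (-((2:ℝ)^k * π) / ((2:ℝ)^k - 1)) (((2:ℝ)^k * π) / ((2:ℝ)^k - 1)) ∪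
      (⋃ j ∈ Finset.Icc 1 (k-1), wsR k j) := by
  have hπ := Real.pi_pos
  have hkk : (2:ℝ)^k = 2 * 2^(k-1) := by rw [← pow_succ']; congr 1; omega
  have h4 : (4:ℝ) ≤ 2^k := by
    calc (4:ℝ) = 2^2 := by norm_num
    _ ≤ 2^k := by apply pow_le_pow_right₀ (by norm_num) hk
  have hc0 : (0:ℝ) < 2^k - 1 := by linarith
  have hcne : ((2:ℝ)^k - 1) ≠ 0 := ne_of_gt hc0
  have himg : ∀ a b : ℝ, (fun x : ℝ => 2 * x) '' Ico a b = Ico (2*a) (2*b) :=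
    fun a b => image_mul_left_Ico two_pos a b
  have hwsL : ∀ j, (fun x : ℝ => 2*x) '' wsL k j = wsL k (j+1) := by
    intro j
    simp only [wsL]
    rw [himg, pow_succ']
    exact Ico_congr' (by ring) (by ring)
  have hwsR : ∀ j, (fun x : ℝ => 2*x) '' wsR k j = wsR k (j+1) := by
    intro j
    simp only [wsR]
    rw [himg, pow_succ']
    exact Ico_congr' (by ring) (by ring)
  have hA : (fun x : ℝ => 2*x) '' Ico (-π) (-(((2:ℝ)^k - 2) * π) / ((2:ℝ)^k - 1)) = wsL k 1 := by
    rw [himg]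
    simp only [wsL, pow_one]
    exact Ico_congr' (by ring) (by field_simp; ring)
  have hC : (fun x : ℝ => 2*x) '' Ico ((((2:ℝ)^k - 2) * π) / ((2:ℝ)^k - 1)) π = wsR k 1 := by
    rw [himg]
    simp only [wsR, pow_one]
    exact Ico_congr' (by field_simp; ring) (by ring)
  have hB : (fun x:ℝ => 2*x) '' Ico (-((2:ℝ)^(k-1) * π) / ((2:ℝ)^k - 1))
      (((2:ℝ)^(k-1) * π) / ((2:ℝ)^k - 1)) =
      Ico (-((2:ℝ)^k * π) / ((2:ℝ)^k - 1)) (((2:ℝ)^k * π) / ((2:ℝ)^k - 1)) := by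
    rw [himg, hkk]
    exact Ico_congr' (by ring) (by ring)
  have hE : genScalingSet2 k =
      (⋃ j ∈ Finset.Icc 1 (k-2), wsL k j) ∪
      Ico (-π) (-(((2:ℝ)^k - 2) * π) / ((2:ℝ)^k - 1)) ∪
      Ico (-((2:ℝ)^(k-1) * π) / ((2:ℝ)^k - 1)) (((2:ℝ)^(k-1) * π) / ((2:ℝ)^k - 1)) ∪
      Ico ((((2:ℝ)^k - 2) * π) / ((2:ℝ)^k - 1)) π ∪
      (⋃ j ∈ Finset.Icc 1 (k-2), wsR k j) := rfl
  rw [hE]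
  rw [image_union, image_union, image_union, image_union, image_iUnion₂, image_iUnion₂]
  simp only [hwsL, hwsR]
  rw [hA, hB, hC]
  have hLcomb : (⋃ j ∈ Finset.Icc 1 (k-2), wsL k (j+1)) ∪ wsL k 1
      = ⋃ j ∈ Finset.Icc 1 (k-1), wsL k j := by
    ext x
    simp only [mem_union, mem_iUnion, Finset.mem_Icc, exists_prop]
    constructor
    · rintro (⟨j, hj, hx⟩ | hx)
      · exact ⟨j+1, by omega, hx⟩
      · exact ⟨1, by omega, hx⟩
    · rintro ⟨j, hj, hx⟩
      rcases Nat.eq_or_lt_of_le hj.1 with h1 | h1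
      · right; rw [← h1] at hx; exact hx
      · left; exact ⟨j-1, by omega, by rw [Nat.sub_add_cancel (by omega : 1 ≤ j)]; exact hx⟩
  have hRcomb : wsR k 1 ∪ (⋃ j ∈ Finset.Icc 1 (k-2), wsR k (j+1))
      = ⋃ j ∈ Finset.Icc 1 (k-1), wsR k j := by
    ext x
    simp only [mem_union, mem_iUnion, Finset.mem_Icc, exists_prop]
    constructor
    · rintro (hx | ⟨j, hj, hx⟩)
      · exact ⟨1, by omega, hx⟩
      · exact ⟨j+1, by omega, hx⟩
    · rintro ⟨j, hj, hx⟩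
      rcases Nat.eq_or_lt_of_le hj.1 with h1 | h1
      · left; rw [← h1] at hx; exact hx
      · right; exact ⟨j-1, by omega, by rw [Nat.sub_add_cancel (by omega : 1 ≤ j)]; exact hx⟩
  rw [← hLcomb, ← hRcomb]
  ext x
  simp only [mem_union]
  tauto

set_option maxHeartbeats 2000000 in
/-- The wavelet set `W = 2E \ E` is the indicated union of six intervals. -/
theorem waveletSet2_eq (k : ℕ) (hk : 2 ≤ k) :
    ((fun x : ℝ => 2 * x) '' genScalingSet2 k) \ genScalingSet2 k =
      Ico (-((2:ℝ)^(k-1) * π)) (-(((2:ℝ)^(2*k-1) - (2:ℝ)^k) * π) / ((2:ℝ)^k - 1)) ∪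
      Ico (-((2:ℝ)^k * π) / ((2:ℝ)^k - 1)) (-π) ∪
      Ico (-(((2:ℝ)^k - 2) * π) / ((2:ℝ)^k - 1)) (-((2:ℝ)^(k-1) * π) / ((2:ℝ)^k - 1)) ∪
      Ico (((2:ℝ)^(k-1) * π) / ((2:ℝ)^k - 1)) ((((2:ℝ)^k - 2) * π) / ((2:ℝ)^k - 1)) ∪
      Ico π (((2:ℝ)^k * π) / ((2:ℝ)^k - 1)) ∪
      Ico ((((2:ℝ)^(2*k-1) - (2:ℝ)^k) * π) / ((2:ℝ)^k - 1)) ((2:ℝ)^(k-1) * π) := by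
  have hπ := Real.pi_pos
  have hkk : (2:ℝ)^k = 2 * 2^(k-1) := by rw [← pow_succ']; congr 1; omega
  have hk2 : (2:ℝ)^(k-1) = 2 * 2^(k-2) := by rw [← pow_succ']; congr 1; omega
  have h2kk : (2:ℝ)^(2*k-1) = 2^(k-1) * 2^k := by rw [← pow_add]; congr 1; omega
  have h4 : (4:ℝ) ≤ 2^k := by
    calc (4:ℝ) = 2^2 := by norm_num
    _ ≤ 2^k := by exact pow_le_pow_right₀ (by norm_num) hk
  have hc0 : (0:ℝ) < 2^k - 1 := by linarith
  have hcne : ((2:ℝ)^k - 1) ≠ 0 := ne_of_gt hc0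
  have h1k2 : (1:ℝ) ≤ 2^(k-2) := one_le_pow₀ (by norm_num)
  have h2k1 : (2:ℝ) ≤ 2^(k-1) := by nlinarith [h1k2]
  have hX0 : (0:ℝ) < 2^(k-2) := by positivity
  have hXπ : (0:ℝ) < 2^(k-2)*π := mul_pos hX0 hπ
  -- key interval-arithmetic facts
  have hselfj : ∀ j : ℕ, (2:ℝ)^j*π/((2:ℝ)^k-1) ≤ (2:ℝ)^j*π := by
    intro j
    rw [div_le_iff₀ hc0]
    have hjp : (0:ℝ) < 2^j*π := by positivity
    nlinarith [mul_nonneg hjp.le (by linarith : (0:ℝ) ≤ 2^k - 2)]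
  have hBle : (2:ℝ)^(k-1)*π/((2:ℝ)^k-1) ≤ (2:ℝ)^(k-2)*π := by
    rw [hk2, div_le_iff₀ hc0]
    nlinarith [hXπ, mul_nonneg hXπ.le (by linarith : (0:ℝ) ≤ 2^k - 3)]
  have hLtop : -((2:ℝ)^(k-1)*π) + (2:ℝ)^(k-1)*π/((2:ℝ)^k-1) ≤ -((2:ℝ)^(k-2)*π) := by
    have h := hBle
    rw [hk2] at h ⊢
    linarith
  have hRbot : (2:ℝ)^(k-2)*π ≤ (2:ℝ)^(k-1)*π - (2:ℝ)^(k-1)*π/((2:ℝ)^k-1) := by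
    have h := hBle
    rw [hk2] at h ⊢
    linarith
  have hAC0 : (0:ℝ) ≤ (((2:ℝ)^k - 2) * π) / ((2:ℝ)^k - 1) :=
    div_nonneg (by nlinarith) hc0.le
  have hEbound : ∀ x ∈ genScalingSet2 k, -((2:ℝ)^(k-2)*π) ≤ x ∧ x < (2:ℝ)^(k-2)*π := by
    intro x hx
    simp only [genScalingSet2, mem_union, mem_iUnion, Finset.mem_Icc, exists_prop,
      mem_Ico] at hx
    rcases hx with ((((⟨j, hj, hxl, hxu⟩ | ⟨hxl, hxu⟩) | ⟨hxl, hxu⟩) | ⟨hxl, hxu⟩)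
      | ⟨j, hj, hxl, hxu⟩)
    · have hj2 : (2:ℝ)^j ≤ 2^(k-2) := pow_le_pow_right₀ (by norm_num) hj.2
      constructor
      · linarith [mul_nonneg (sub_nonneg.mpr hj2) hπ.le]
      · linarith [hselfj j, hXπ]
    · constructor
      · linarith [mul_nonneg (sub_nonneg.mpr h1k2) hπ.le]
      · rw [neg_div] at hxu
        linarith [hAC0, hXπ]
    · rw [neg_div] at hxl
      exact ⟨by linarith [hBle], by linarith [hBle]⟩
    · constructor
      · linarith [hAC0, hXπ]
      · linarith [mul_nonneg (sub_nonneg.mpr h1k2) hπ.le]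
    · have hj2 : (2:ℝ)^j ≤ 2^(k-2) := pow_le_pow_right₀ (by norm_num) hj.2
      constructor
      · linarith [hselfj j, hXπ]
      · linarith [mul_nonneg (sub_nonneg.mpr hj2) hπ.le]
  -- disjointness of the doubled middle interval from the L and R families
  have hRjB : ∀ j : ℕ, 1 ≤ j →
      ((2:ℝ)^k*π)/((2:ℝ)^k-1) ≤ (2:ℝ)^j*π - (2:ℝ)^j*π/((2:ℝ)^k-1) := by
    intro j hj
    have h2j : (2:ℝ) ≤ 2^j := by
      calc (2:ℝ) = 2^1 := (pow_one 2).symm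
      _ ≤ 2^j := pow_le_pow_right₀ (by norm_num) hj
    have e : (2:ℝ)^j*π - (2:ℝ)^j*π/((2:ℝ)^k-1)
        = ((2:ℝ)^j*π*((2:ℝ)^k-2))/((2:ℝ)^k-1) := by
      field_simp
      ring
    rw [e, div_le_div_iff_of_pos_right hc0]
    have h1 := mul_le_mul_of_nonneg_right h2j
      (mul_nonneg hπ.le (by linarith : (0:ℝ) ≤ 2^k - 2))
    have h2 := mul_nonneg hπ.le (by linarith : (0:ℝ) ≤ 2^k - 4)
    nlinarith [h1, h2]
  have hLjB : ∀ j : ℕ, 1 ≤ j →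
      -((2:ℝ)^j*π) + (2:ℝ)^j*π/((2:ℝ)^k-1) ≤ -((2:ℝ)^k*π)/((2:ℝ)^k-1) := by
    intro j hj
    rw [neg_div]
    linarith [hRjB j hj]
  -- main computation
  rw [twoE k hk, union_diff_distrib, union_diff_distrib]
  have hsplit : Finset.Icc 1 (k-1) = insert (k-1) (Finset.Icc 1 (k-2)) := by
    ext j; simp only [Finset.mem_Icc, Finset.mem_insert]; omega
  have hLdiff : (⋃ j ∈ Finset.Icc 1 (k-1), wsL k j) \ genScalingSet2 k = wsL k (k-1) := by
    rw [hsplit, Finset.set_biUnion_insert, union_diff_distrib]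
    have h1 : wsL k (k-1) \ genScalingSet2 k = wsL k (k-1) := by
      apply sdiff_eq_left.mpr
      rw [Set.disjoint_left]
      intro x hx hxE
      have hb := (hEbound x hxE).1
      simp only [wsL, mem_Ico] at hx
      linarith [hx.2, hLtop]
    have h2 : (⋃ j ∈ Finset.Icc 1 (k-2), wsL k j) \ genScalingSet2 k = ∅ := by
      rw [diff_eq_empty]
      intro x hx
      exact Or.inl (Or.inl (Or.inl (Or.inl hx)))
    rw [h1, h2, union_empty]
  have hRdiff : (⋃ j ∈ Finset.Icc 1 (k-1), wsR k j) \ genScalingSet2 k = wsR k (k-1) := by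
    rw [hsplit, Finset.set_biUnion_insert, union_diff_distrib]
    have h1 : wsR k (k-1) \ genScalingSet2 k = wsR k (k-1) := by
      apply sdiff_eq_left.mpr
      rw [Set.disjoint_left]
      intro x hx hxE
      have hb := (hEbound x hxE).2
      simp only [wsR, mem_Ico] at hx
      linarith [hx.1, hRbot]
    have h2 : (⋃ j ∈ Finset.Icc 1 (k-2), wsR k j) \ genScalingSet2 k = ∅ := by
      rw [diff_eq_empty]
      intro x hx
      exact Or.inr hx
    rw [h1, h2, union_empty]
  have hBdiff : Ico (-((2:ℝ)^k * π) / ((2:ℝ)^k - 1)) (((2:ℝ)^k * π) / ((2:ℝ)^k - 1))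
        \ genScalingSet2 k
      = Ico (-((2:ℝ)^k * π) / ((2:ℝ)^k - 1)) (-π) ∪
        Ico (-(((2:ℝ)^k - 2) * π) / ((2:ℝ)^k - 1)) (-((2:ℝ)^(k-1) * π) / ((2:ℝ)^k - 1)) ∪
        Ico (((2:ℝ)^(k-1) * π) / ((2:ℝ)^k - 1)) ((((2:ℝ)^k - 2) * π) / ((2:ℝ)^k - 1)) ∪
        Ico π (((2:ℝ)^k * π) / ((2:ℝ)^k - 1)) := by
    have hEeq : genScalingSet2 k =
        (Ico (-π) (-(((2:ℝ)^k - 2) * π) / ((2:ℝ)^k - 1)) ∪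
         Ico (-((2:ℝ)^(k-1) * π) / ((2:ℝ)^k - 1)) (((2:ℝ)^(k-1) * π) / ((2:ℝ)^k - 1)) ∪
         Ico ((((2:ℝ)^k - 2) * π) / ((2:ℝ)^k - 1)) π) ∪
        ((⋃ j ∈ Finset.Icc 1 (k-2), wsL k j) ∪ (⋃ j ∈ Finset.Icc 1 (k-2), wsR k j)) := by
      simp only [genScalingSet2, wsL, wsR]
      ext x
      simp only [mem_union]
      tauto
    have hdisjLR : Disjoint
        (Ico (-((2:ℝ)^k * π) / ((2:ℝ)^k - 1)) (((2:ℝ)^k * π) / ((2:ℝ)^k - 1)))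
        ((⋃ j ∈ Finset.Icc 1 (k-2), wsL k j) ∪ (⋃ j ∈ Finset.Icc 1 (k-2), wsR k j)) := by
      rw [Set.disjoint_left]
      intro x hx hmem
      rw [mem_Ico] at hx
      simp only [mem_union, mem_iUnion, Finset.mem_Icc, exists_prop, wsL, wsR,
        mem_Ico] at hmem
      rcases hmem with ⟨j, hj, hxl, hxu⟩ | ⟨j, hj, hxl, hxu⟩
      · have := hLjB j hj.1
        rw [neg_div] at this hx
        linarith [hx.1]
      · linarith [hRjB j hj.1, hx.2]
    rw [hEeq, diff_union_right_of_disjoint hdisjLR]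
    apply Ico_sdiff_three
    · rw [neg_div, neg_le_neg_iff, le_div_iff₀ hc0]
      nlinarith [hπ]
    · rw [neg_div, neg_div, neg_le_neg_iff, div_le_div_iff_of_pos_right hc0]
      nlinarith [h2k1, hπ]
    · rw [div_le_div_iff_of_pos_right hc0]
      nlinarith [h2k1, hπ]
    · rw [le_div_iff₀ hc0]
      nlinarith [hπ]
    · rw [neg_div, neg_le_neg_iff, div_le_iff₀ hc0]
      nlinarith [hπ]
    · rw [neg_div]
      have h0 : (0:ℝ) ≤ (2:ℝ)^(k-1)*π/((2:ℝ)^k-1) := by positivity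
      linarith
    · rw [div_le_iff₀ hc0]
      nlinarith [hπ]
  rw [hLdiff, hRdiff, hBdiff]
  have hne2 : (2:ℝ)*2^(k-1) - 1 ≠ 0 := by nlinarith [h2k1]
  have eqL : wsL k (k-1) =
      Ico (-((2:ℝ)^(k-1) * π)) (-(((2:ℝ)^(2*k-1) - (2:ℝ)^k) * π) / ((2:ℝ)^k - 1)) := by
    simp only [wsL]
    refine Ico_congr' rfl ?_
    rw [h2kk, hkk]
    rw [eq_div_iff hne2, add_mul, div_mul_cancel₀ _ hne2]
    ring
  have eqR : wsR k (k-1) =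
      Ico ((((2:ℝ)^(2*k-1) - (2:ℝ)^k) * π) / ((2:ℝ)^k - 1)) ((2:ℝ)^(k-1) * π) := by
    simp only [wsR]
    refine Ico_congr' ?_ rfl
    rw [h2kk, hkk]
    rw [eq_div_iff hne2, sub_mul, div_mul_cancel₀ _ hne2]
    ring
  rw [eqL, eqR]
  ext x
  simp only [mem_union]
  tauto
end

section
/- Let $k \geq 2$ and define $\sigma$ on $A_1 \cup A_2$ by $\sigma(\xi) = \xi + 2^k\pi$ for $\xi \in A_1 = [\frac{-2^k\pi}{2^k-1}, -\pi)$ and $\sigma(\xi) = \xi - 2^{k-1}\pi$ for $\xi \in A_2 = [\frac{(2^{2k-1}-2^k)\pi}{2^k-1}, 2^{k-1}\pi - \frac{\pi}{2})$. Extend $\sigma$ 2-homogeneously by $\sigma(x) = 2^{-n}\sigma(2^n x)$ whenever $2^n x \in A_1 \cup A_2$. Then $\sigma$ is involutive on $A_1 \cup A_2$: for every $\xi \in A_1 \cup A_2$, $\sigma^2(\xi) = \xi$, where the second application of $\sigma$ uses the homogeneous extension. Concretely: for $\xi \in A_1$, $2\sigma(\frac{1}{2}\sigma(\xi)) = \xi$,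 and for $\xi \in A_2$, $\frac{1}{2}\sigma(2\sigma(\xi)) = \xi$. -/
open Real Set

/-! Writing `a = 2^(k-1)`, the rescaled branches `x ↦ (x + 2a π)/2` and `x ↦ 2(x - a π)` are
increasing affine maps, inverse to each other, and each sends the endpoints of one interval to
the endpoints of the other. -/

section
variable {a : ℝ} (p : ℝ)

theorem mapsTo_half_add_Ico (ha : 2 * a - 1 ≠ 0) :
    MapsTo (fun x => (1/2) * (x + 2 * a * p)) (Ico (-(2 * a * p) / (2 * a - 1)) (-p))
      (Ico ((2 * a * a - 2 * a) * p / (2 * a - 1)) (a * p - p / 2)) := by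
  have hlower : (2 * a * a - 2 * a) * p / (2 * a - 1)
      = (1/2) * (-(2 * a * p) / (2 * a - 1) + 2 * a * p) := by
    field_simp; ring
  rintro x ⟨hlo, hhi⟩
  exact ⟨hlower ▸ by linarith, by linarith⟩

theorem mapsTo_two_mul_sub_Ico (ha : 2 * a - 1 ≠ 0) :
    MapsTo (fun x => 2 * (x - a * p)) (Ico ((2 * a * a - 2 * a) * p / (2 * a - 1)) (a * p - p / 2))
      (Ico (-(2 * a * p) / (2 * a - 1)) (-p)) := by
  have hlower : -(2 * a * p) / (2 * a - 1)
      = 2 * ((2 * a * a - 2 * a) * p / (2 * a - 1) - a * p) := by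
    field_simp; ring
  rintro x ⟨hlo, hhi⟩
  exact ⟨hlower ▸ by linarith, by linarith⟩

end

/-- Involutivity of the interpolation map `σ` for dilation 2: if `σ(ξ) = ξ + 2^k π` on `A₁`
and `σ(ξ) = ξ - 2^{k-1} π` on `A₂`, then for `ξ ∈ A₁` we have `σ(ξ)/2 ∈ A₂` and
`2σ(σ(ξ)/2) = ξ`, and for `ξ ∈ A₂` we have `2σ(ξ) ∈ A₁` and `σ(2σ(ξ))/2 = ξ`. -/
theorem sigma_involutive_dilation_two (k : ℕ) (hk : 2 ≤ k) (σ : ℝ → ℝ)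
    (A₁ : Set ℝ) (hA₁ : A₁ = Ico (-((2:ℝ)^k * π) / ((2:ℝ)^k - 1)) (-π))
    (A₂ : Set ℝ) (hA₂ : A₂ = Ico ((((2:ℝ)^(2*k-1) - (2:ℝ)^k) * π) / ((2:ℝ)^k - 1))
      ((2:ℝ)^(k-1) * π - π/2))
    (hσ₁ : ∀ ξ ∈ A₁, σ ξ = ξ + (2:ℝ)^k * π)
    (hσ₂ : ∀ ξ ∈ A₂, σ ξ = ξ - (2:ℝ)^(k-1) * π) :
    (∀ ξ ∈ A₁, (1/2) * σ ξ ∈ A₂ ∧ 2 * σ ((1/2) * σ ξ) = ξ) ∧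
    (∀ ξ ∈ A₂, 2 * σ ξ ∈ A₁ ∧ (1/2) * σ (2 * σ ξ) = ξ) := by
  have hpow : (2:ℝ)^k = 2 * 2^(k-1) := by
    rw [← pow_succ', Nat.sub_add_cancel (by omega)]
  have hpow' : (2:ℝ)^(2*k-1) = 2 * 2^(k-1) * 2^(k-1) := by
    rw [show 2*k-1 = (k-1) + (k-1) + 1 by omega, pow_succ, pow_add]; ring
  subst hA₁ hA₂
  rw [hpow, hpow'] at *
  set a : ℝ := 2^(k-1)
  have ha : 2 * a - 1 ≠ 0 := by
    have : (1:ℝ) ≤ a := one_le_pow₀ (by norm_num)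
    linarith
  refine ⟨fun ξ hξ => ?_, fun ξ hξ => ?_⟩
  · have hmem := mapsTo_half_add_Ico π ha hξ
    rw [hσ₁ ξ hξ]
    exact ⟨hmem, by rw [hσ₂ _ hmem]; ring⟩
  · have hmem := mapsTo_two_mul_sub_Ico π ha hξ
    rw [hσ₂ ξ hξ]
    exact ⟨hmem, by rw [hσ₁ _ hmem]; ring⟩
end

section
/- Let $(\psi_n)$ be a sequence in $L^2(\mathbb{R})$ whose Fourier transforms $\hat\psi_n$ converge in measure to $\hat\psi$ for some $\psi \in L^2(\mathbb{R})$. Suppose there exists a set $F$ of positive finite measure and an integer $l$ such that $F \subseteq \mathrm{supp}(\hat\psi)$ and $F + 2\pi l \subseteq \mathrm{supp}(\hat\psi)$. Then there exists $N$ such that for all $n \geq N$, there is a set $F_n \subseteq F$ of positive measure with $F_n \subseteq \mathrm{supp}(\hat\psi_n)$ and $F_n + 2\pi l \subseteq \mathrm{supp}(\hat\psi_n)$ up to null sets. -/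
open MeasureTheory
open scoped ENNReal

/-- The real Fourier integral of any function `ℝ → ℂ` is a measurable function:
if the function is integrable it is continuous, and otherwise it is identically `0`. -/
lemma measurable_fourierIntegral_aux (g : ℝ → ℂ) :
    Measurable (FourierTransform.fourier g) := by
  by_cases hg : Integrable g (volume : Measure ℝ)
  · exact (VectorFourier.fourierIntegral_continuous Real.continuous_fourierChar
      (innerSL ℝ).continuous₂ hg).measurable
  · have : FourierTransform.fourier g = fun _ => 0 := by
      funext w
      rw [Real.fourier_eq]
      apply integral_undef
      rw [Real.fourierIntegral_convergent_iff]
      exact hg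
    rw [this]
    exact measurable_const

/-- If `ψ̂ₙ → ψ̂` in measure and `supp ψ̂` is partially self-similar with respect to `2πl`
(witnessed by `F` of positive finite measure with `F` and `F + 2πl` inside `supp ψ̂`),
then eventually `supp ψ̂ₙ` is partially self-similar with respect to `2πl`. -/
theorem eventually_partially_self_similar (ψn : ℕ → ℝ → ℂ) (ψ : ℝ → ℂ)
    (hψn : ∀ n, MemLp (ψn n) 2 (volume : Measure ℝ))
    (hψ : MemLp ψ 2 (volume : Measure ℝ))
    (hconv : TendstoInMeasure (volume : Measure ℝ)
      (fun n => FourierTransform.fourier (ψn n)) Filter.atTop (FourierTransform.fourier ψ))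
    (F : Set ℝ) (hFm : MeasurableSet F) (hFpos : 0 < volume F) (hFfin : volume F < ⊤)
    (l : ℤ)
    (hF : ∀ᵐ ξ : ℝ, ξ ∈ F → FourierTransform.fourier ψ ξ ≠ 0)
    (hFl : ∀ᵐ ξ : ℝ, ξ ∈ F → FourierTransform.fourier ψ (ξ + 2 * Real.pi * l) ≠ 0) :
    ∃ N : ℕ, ∀ n ≥ N, ∃ Fn : Set ℝ, MeasurableSet Fn ∧ Fn ⊆ F ∧ 0 < volume Fn ∧
      (∀ᵐ ξ : ℝ, ξ ∈ Fn → FourierTransform.fourier (ψn n) ξ ≠ 0) ∧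
      (∀ᵐ ξ : ℝ, ξ ∈ Fn → FourierTransform.fourier (ψn n) (ξ + 2 * Real.pi * l) ≠ 0) := by
  classical
  set f : ℝ → ℂ := FourierTransform.fourier ψ with hf_def
  have hfm : Measurable f := measurable_fourierIntegral_aux ψ
  have hfnm : ∀ n, Measurable (FourierTransform.fourier (ψn n)) :=
    fun n => measurable_fourierIntegral_aux (ψn n)
  set c : ℝ := 2 * Real.pi * l with hc_def
  -- the sets where |f| and its translate are bounded below
  set A : ℕ → Set ℝ := fun k =>
    F ∩ {ξ | (1 : ℝ) / (k + 1) ≤ ‖f ξ‖} ∩ {ξ | (1 : ℝ) / (k + 1) ≤ ‖f (ξ + c)‖} with hA_def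
  have hAm : ∀ k, MeasurableSet (A k) := by
    intro k
    refine (hFm.inter (measurableSet_le measurable_const hfm.norm)).inter ?_
    exact measurableSet_le measurable_const ((hfm.comp (measurable_add_const c)).norm)
  have hAmono : Monotone A := by
    intro i j hij
    have h : (1 : ℝ) / (j + 1) ≤ 1 / (i + 1) := by
      apply one_div_le_one_div_of_le <;> [positivity; exact_mod_cast by omega]
    rintro ξ ⟨⟨h1, h2⟩, h3⟩
    exact ⟨⟨h1, le_trans h h2⟩, le_trans h h3⟩
  -- F is a.e. contained in the union of the A k
  have hFsub : F ≤ᵐ[(volume : Measure ℝ)] ⋃ k, A k := by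
    filter_upwards [hF, hFl] with ξ h1 h2 hξF
    have h1' : f ξ ≠ 0 := h1 hξF
    have h2' : f (ξ + c) ≠ 0 := h2 hξF
    obtain ⟨k, hk⟩ := exists_nat_one_div_lt
      (lt_min (norm_pos_iff.mpr h1') (norm_pos_iff.mpr h2'))
    exact Set.mem_iUnion.2 ⟨k, ⟨hξF, (le_min_iff.mp hk.le).1⟩, (le_min_iff.mp hk.le).2⟩
  have hle : volume F ≤ ⨆ k, volume (A k) := by
    calc volume F ≤ volume (⋃ k, A k) := measure_mono_ae hFsub
    _ = ⨆ k, volume (A k) := (hAmono.directed_le).measure_iUnion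
  -- pick k with positive measure
  obtain ⟨k, hk⟩ : ∃ k, 0 < volume (A k) := by
    by_contra h
    push_neg at h
    simp only [le_zero_iff] at h
    simp only [h, ENNReal.iSup_zero] at hle
    exact absurd (le_antisymm hle zero_le).symm hFpos.ne
  set ε : ℝ := 1 / (k + 1) with hε_def
  have hεpos : 0 < ε := by positivity
  set S : Set ℝ := A k with hS_def
  have hSF : S ⊆ F := fun ξ hξ => hξ.1.1
  have hSfin : volume S < ⊤ := lt_of_le_of_lt (measure_mono hSF) hFfin
  -- choose N by convergence in measure
  have h4 : (0 : ℝ≥0∞) < volume S / 4 :=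
    ENNReal.div_pos hk.ne' (by norm_num)
  have hev : ∀ᶠ n in Filter.atTop,
      volume {x | ε / 2 ≤ dist (FourierTransform.fourier (ψn n) x) (f x)} < volume S / 4 :=
    (tendstoInMeasure_iff_dist.mp hconv (ε / 2) (by positivity)).eventually_lt_const h4
  obtain ⟨N, hN⟩ := Filter.eventually_atTop.mp hev
  refine ⟨N, fun n hn => ?_⟩
  set B : Set ℝ := {x | ε / 2 ≤ dist (FourierTransform.fourier (ψn n) x) (f x)} with hB_def
  have hBlt : volume B < volume S / 4 := hN n hn
  set Fn : Set ℝ :=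
    S ∩ {ξ | dist (FourierTransform.fourier (ψn n) ξ) (f ξ) < ε / 2}
      ∩ {ξ | dist (FourierTransform.fourier (ψn n) (ξ + c)) (f (ξ + c)) < ε / 2} with hFn_def
  have hFnm : MeasurableSet Fn := by
    have hd : Measurable fun ξ => dist (FourierTransform.fourier (ψn n) ξ) (f ξ) :=
      (hfnm n).dist hfm
    refine ((hAm k).inter (measurableSet_lt hd measurable_const)).inter ?_
    exact measurableSet_lt (hd.comp (measurable_add_const c)) measurable_const
  have hFnF : Fn ⊆ F := fun ξ hξ => hSF hξ.1.1
  -- positivity of the measure of Fn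
  have hcover : S ⊆ Fn ∪ (B ∪ (fun ξ => ξ + c) ⁻¹' B) := by
    intro ξ hξ
    by_cases h1 : dist (FourierTransform.fourier (ψn n) ξ) (f ξ) < ε / 2
    · by_cases h2 : dist (FourierTransform.fourier (ψn n) (ξ + c)) (f (ξ + c)) < ε / 2
      · exact Or.inl ⟨⟨hξ, h1⟩, h2⟩
      · exact Or.inr (Or.inr (not_lt.mp h2))
    · exact Or.inr (Or.inl (not_lt.mp h1))
  have hpre : volume ((fun ξ => ξ + c) ⁻¹' B) = volume B :=
    measure_preimage_add_right _ _ _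
  have hFnpos : 0 < volume Fn := by
    by_contra h
    push_neg at h
    have hFn0 : volume Fn = 0 := le_antisymm h zero_le
    have : volume S ≤ volume Fn + (volume B + volume ((fun ξ => ξ + c) ⁻¹' B)) :=
      le_trans (measure_mono hcover)
        (le_trans (measure_union_le _ _) (add_le_add le_rfl (measure_union_le _ _)))
    rw [hFn0, zero_add, hpre] at this
    have hlt : volume B + volume B < volume S / 4 + volume S / 4 :=
      ENNReal.add_lt_add hBlt hBlt
    have h2 : volume S / 4 + volume S / 4 = volume S / 2 := by
      rw [← ENNReal.add_div]
      rw [show volume S + volume S = 2 * volume S by ring]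
      rw [show (4 : ℝ≥0∞) = 2 * 2 by norm_num]
      rw [ENNReal.mul_div_mul_left _ _ (by norm_num) (by norm_num)]
    have : volume S < volume S / 2 := lt_of_le_of_lt this (h2 ▸ hlt)
    exact absurd this (not_lt.mpr (ENNReal.half_le_self))
  refine ⟨Fn, hFnm, hFnF, hFnpos, ?_, ?_⟩
  · apply Filter.Eventually.of_forall
    rintro ξ ⟨⟨⟨⟨_, hf1⟩, _⟩, hd1⟩, _⟩ h0
    simp only [Set.mem_setOf_eq] at hd1 hf1
    rw [h0, dist_zero_left] at hd1
    have : ε ≤ ‖f ξ‖ := hf1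
    linarith
  · apply Filter.Eventually.of_forall
    rintro ξ ⟨⟨⟨⟨_, _⟩, hf2⟩, _⟩, hd2⟩ h0
    simp only [Set.mem_setOf_eq] at hd2 hf2
    rw [show ξ + 2 * Real.pi * (l : ℝ) = ξ + c from rfl] at h0
    rw [h0, dist_zero_left] at hd2
    have : ε ≤ ‖f (ξ + c)‖ := hf2
    linarith
end
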